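/- arXiv:2203.08091 — 4 statements merged into one kernel-verified Lean document; each statement's English description precedes it below -/
import Mathlib

section
/- Suppose μ ∈ ℚ[[q]] has μ(0) = 0 and every q-coefficient of e^{−μ(q)/z}·φ(z,q) lies in ℚ[[z]] (i.e. has no negative powers of z), where e^{−μ/z} := ∑_{k≥0} (−μ)^k/(k!·z^k), a q-power series with coefficients in ℚ[z^{−1}]. Then the power series L := 1 + q·μ′(q) ∈ ℚ[[q]] satisfies L^n − D·q·L^m = 1. -/
/-- Formal derivative `d/dq` on `ℚ[[q]]`. -/
noncomputable def dQ (f : PowerSeries ℚ) : PowerSeries ℚ :=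
  PowerSeries.mk fun k => ((k + 1 : ℕ) : ℚ) * PowerSeries.coeff (R := ℚ) (k + 1) f

/-- The Laurent-series variable `z`. -/
noncomputable def Zl : LaurentSeries ℚ := HahnSeries.single (1 : ℤ) (1 : ℚ)

/-!
With `θ = q d/dq`, the recursion between consecutive coefficients of `φ` says that `φ` is killed
by `P(1 + zθ) := (1 + zθ)^n - 1 - q ∏ₖ ∏_{s=1}^{dₖ} (dₖ (1 + zθ) + s z)`. Since
`zθ e^{-μ/z} = -qμ' e^{-μ/z}`, multiplication by `e^{-μ/z}` conjugates `1 + zθ` into `L + zθ`,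
so `W := e^{-μ/z} φ` is killed by `P(L + zθ)`. By hypothesis `W` has coefficients in `ℚ[[z]]`,
so we may set `z = 0`; there `L + zθ` becomes multiplication by `L` and the equation reads
`(L^n - 1 - D q L^m) W(0, q) = 0`, where `W(0, q)` has constant term `1`.
-/

open Polynomial (aeval) in
theorem Polynomial.aeval_apply_of_semiconj {R S M N : Type*} [CommSemiring R] [CommSemiring S]
    [AddCommMonoid M] [Module R M] [AddCommMonoid N] [Module S N] {σ : R →+* S}
    (Φ : M →ₛₗ[σ] N) {A : Module.End R M} {B : Module.End S N} (h : ∀ x, Φ (A x) = B (Φ x))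
    (p : Polynomial R) (x : M) : Φ (aeval A p x) = aeval B (p.map σ) (Φ x) := by
  have hpow : ∀ k x, Φ ((A ^ k) x) = (B ^ k) (Φ x) := by
    intro k
    induction k with
    | zero => simp
    | succ k ih =>
      intro x
      rw [pow_succ, pow_succ, Module.End.mul_apply, Module.End.mul_apply, ih, h]
  induction p using Polynomial.induction_on' with
  | add p q hp hq => simp [hp, hq]
  | monomial k a => simp [Polynomial.aeval_monomial, Module.algebraMap_end_apply, hpow]

namespace PowerSeries

variable {R S : Type*} [CommRing R] [CommRing S]

theorem map_derivative (g : R →+* S) (f : R⟦X⟧) : map g (d⁄dX R f) = d⁄dX S (map g f) := by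
  ext n
  simp [coeff_derivative]

theorem coeff_X_mul_derivative (f : R⟦X⟧) (n : ℕ) : coeff n (X * d⁄dX R f) = n * coeff n f := by
  cases n with
  | zero => simp
  | succ n => simp [coeff_derivative, mul_comm]

theorem coeff_pow_eq_zero_of_lt {f : R⟦X⟧} (hf : constantCoeff f = 0) {n k : ℕ} (h : n < k) :
    coeff n (f ^ k) = 0 :=
  coeff_of_lt_order n ((Nat.cast_lt.2 h).trans_le (le_order_pow_of_constantCoeff_eq_zero k hf))

theorem constantCoeff_C_mul_map (g : R →+* S) (w : S) {f : R⟦X⟧} (hf : constantCoeff f = 0) :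
    constantCoeff (C w * map g f) = 0 := by
  simp [← coeff_zero_eq_constantCoeff_apply, coeff_map, hf]

theorem one_add_pow_sub_one_ne_zero [IsDomain R] [CharZero R] {y : R⟦X⟧} (hy : y ≠ 0)
    (hy0 : constantCoeff y = 0) {n : ℕ} (hn : n ≠ 0) : (1 + y) ^ n - 1 ≠ 0 := by
  rw [← geom_sum_mul, add_sub_cancel_left]
  refine mul_ne_zero (fun h => hn ?_) hy
  simpa [hy0] using congrArg constantCoeff h

theorem derivative_exp_subst {A : Type*} [CommRing A] [Algebra ℚ A] {a : A⟦X⟧}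
    (ha : constantCoeff a = 0) : d⁄dX A ((exp A).subst a) = (exp A).subst a * d⁄dX A a := by
  rw [derivative_subst (HasSubst.of_constantCoeff_zero' ha), derivative_exp]

theorem coeff_exp_subst {A : Type*} [CommRing A] [Algebra ℚ A] {a : A⟦X⟧}
    (ha : constantCoeff a = 0) (n : ℕ) :
    coeff n ((exp A).subst a) =
      ∑ k ∈ Finset.range (n + 1), algebraMap ℚ A (1 / k.factorial) * coeff n (a ^ k) := by
  rw [coeff_subst' (HasSubst.of_constantCoeff_zero' ha),
    finsum_eq_sum_of_support_subset (s := Finset.range (n + 1))]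
  · simp [coeff_exp]
  · intro k hk
    by_contra h
    simp only [Finset.coe_range, Set.mem_Iio, not_lt] at h
    exact hk (by simp [coeff_pow_eq_zero_of_lt ha (Nat.lt_of_succ_le h)])

theorem exists_map_ofPowerSeries_eq {W : (LaurentSeries R)⟦X⟧}
    (h : ∀ β, ∀ j < 0, (coeff β W).coeff j = 0) :
    ∃ W' : R⟦X⟧⟦X⟧, map (HahnSeries.ofPowerSeries ℤ R) W' = W := by
  have hlift (x : LaurentSeries R) (hx : ∀ j < 0, x.coeff j = 0) :
      HahnSeries.ofPowerSeries ℤ R (mk fun i => x.coeff i) = x := by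
    ext i
    rw [coeff_coe]
    split_ifs with hi
    · exact (hx i hi).symm
    · simp [Int.natAbs_of_nonneg (not_lt.1 hi)]
  exact ⟨mk fun β => mk fun i => (coeff β W).coeff i, by ext1 β; simp [hlift _ (h β)]⟩

/-- `Λ + z θ`, where `θ = q d/dq`. -/
noncomputable def eulerOp (z : R) (Λ : R⟦X⟧) : Module.End R R⟦X⟧ :=
  Algebra.lmul R R⟦X⟧ Λ + z • Algebra.lmul R R⟦X⟧ X ∘ₗ (d⁄dX R).toLinearMap

variable {z : R} {Λ : R⟦X⟧}

theorem eulerOp_apply (f : R⟦X⟧) : eulerOp z Λ f = Λ * f + z • (X * d⁄dX R f) := rfl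

theorem coeff_eulerOp_one (f : R⟦X⟧) (n : ℕ) :
    coeff n (eulerOp z 1 f) = (1 + n * z) * coeff n f := by
  rw [eulerOp_apply, map_add, one_mul, LinearMap.map_smul, coeff_X_mul_derivative, smul_eq_mul]
  ring

theorem eulerOp_zero (Λ : R⟦X⟧) : eulerOp 0 Λ = Algebra.lmul R R⟦X⟧ Λ := by
  simp [eulerOp]

theorem mul_eulerOp {E U : R⟦X⟧} (hE : z • (X * d⁄dX R E) = -(U * E)) (f : R⟦X⟧) :
    E * eulerOp z Λ f = eulerOp z (Λ + U) (E * f) := by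
  rw [smul_eq_C_mul] at hE
  rw [eulerOp_apply, eulerOp_apply, Derivation.leibniz, smul_eq_mul, smul_eq_mul, smul_eq_C_mul,
    smul_eq_C_mul]
  linear_combination (-f) * hE

theorem map_eulerOp (g : R →+* S) (f : R⟦X⟧) :
    map g (eulerOp z Λ f) = eulerOp (g z) (map g Λ) (map g f) := by
  simp [eulerOp_apply, map_derivative, smul_eq_C_mul]

theorem coeff_aeval_eulerOp_one (p : Polynomial R) (f : R⟦X⟧) (n : ℕ) :
    coeff n (Polynomial.aeval (eulerOp z 1) p f) = p.eval (1 + n * z) * coeff n f := by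
  have := Polynomial.aeval_apply_of_semiconj (coeff n) (B := Algebra.lmul R R (1 + n * z))
    (fun f => coeff_eulerOp_one f n) p f
  rwa [Polynomial.map_id, Polynomial.aeval_algHom_apply, Polynomial.coe_aeval_eq_eval] at this

theorem mul_aeval_eulerOp {E U : R⟦X⟧} (hE : z • (X * d⁄dX R E) = -(U * E)) (p : Polynomial R)
    (f : R⟦X⟧) :
    E * Polynomial.aeval (eulerOp z Λ) p f = Polynomial.aeval (eulerOp z (Λ + U)) p (E * f) := by
  simpa using Polynomial.aeval_apply_of_semiconj (Algebra.lmul R R⟦X⟧ E) (mul_eulerOp hE) p f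

theorem map_aeval_eulerOp (g : R →+* S) (p : Polynomial R) (f : R⟦X⟧) :
    map g (Polynomial.aeval (eulerOp z Λ) p f) =
      Polynomial.aeval (eulerOp (g z) (map g Λ)) (p.map g) (map g f) :=
  let Φ : R⟦X⟧ →ₛₗ[g] S⟦X⟧ :=
    { toFun := map g
      map_add' := map_add _
      map_smul' := fun r f => by simp [smul_eq_C_mul] }
  Polynomial.aeval_apply_of_semiconj Φ (map_eulerOp g) p f

end PowerSeries

open PowerSeries

section PicardFuchs

variable {R S : Type*} [CommRing R] [CommRing S] {r : ℕ} (n : ℕ) (d : Fin r → ℕ)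

noncomputable def picardFuchsPoly (z : R) : Polynomial R :=
  ∏ k, ∏ s ∈ Finset.range (d k),
    (Polynomial.C (d k : R) * Polynomial.X + Polynomial.C ((s + 1 : ℕ) * z))

theorem map_picardFuchsPoly (g : R →+* S) (z : R) :
    (picardFuchsPoly d z).map g = picardFuchsPoly d (g z) := by
  simp [picardFuchsPoly, Polynomial.map_prod]

theorem eval_picardFuchsPoly (z x : R) :
    (picardFuchsPoly d z).eval x = ∏ k, ∏ s ∈ Finset.range (d k), (d k * x + (s + 1 : ℕ) * z) := by
  simp [picardFuchsPoly, Polynomial.eval_prod]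

theorem aeval_picardFuchsPoly_zero {A : Type*} [CommRing A] [Algebra R A] (x : A) :
    Polynomial.aeval x (picardFuchsPoly d (0 : R)) = ((∏ k, d k ^ d k : ℕ) : A) * x ^ ∑ k, d k := by
  simp [picardFuchsPoly, mul_pow, Finset.prod_mul_distrib, Finset.prod_pow_eq_pow_sum]

/-- The operator `P(Λ + zθ)`, with `P(T) = T^n - 1 - q ∏ₖ ∏_{s=1}^{dₖ} (dₖ T + s z)`. -/
noncomputable def picardFuchsOp (z : R) (Λ : R⟦X⟧) : Module.End R R⟦X⟧ :=
  Polynomial.aeval (eulerOp z Λ) (Polynomial.X ^ n - 1 : Polynomial R) -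
    Algebra.lmul R R⟦X⟧ X * Polynomial.aeval (eulerOp z Λ) (picardFuchsPoly d z)

variable {n d} {z : R}

theorem picardFuchsOp_apply (Λ f : R⟦X⟧) : picardFuchsOp n d z Λ f =
    Polynomial.aeval (eulerOp z Λ) (Polynomial.X ^ n - 1 : Polynomial R) f -
      X * Polynomial.aeval (eulerOp z Λ) (picardFuchsPoly d z) f := rfl

theorem coeff_zero_picardFuchsOp_one (f : R⟦X⟧) : coeff 0 (picardFuchsOp n d z 1 f) = 0 := by
  rw [picardFuchsOp_apply, map_sub, coeff_aeval_eulerOp_one, coeff_zero_X_mul]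
  simp

theorem coeff_succ_picardFuchsOp_one (f : R⟦X⟧) (β : ℕ) :
    coeff (β + 1) (picardFuchsOp n d z 1 f) =
      ((1 + (β + 1 : ℕ) * z) ^ n - 1) * coeff (β + 1) f -
        (picardFuchsPoly d z).eval (1 + β * z) * coeff β f := by
  rw [picardFuchsOp_apply, map_sub, coeff_aeval_eulerOp_one, coeff_succ_X_mul,
    coeff_aeval_eulerOp_one]
  simp

theorem mul_picardFuchsOp {E U : R⟦X⟧} (hE : z • (X * d⁄dX R E) = -(U * E)) (Λ f : R⟦X⟧) :
    E * picardFuchsOp n d z Λ f = picardFuchsOp n d z (Λ + U) (E * f) := by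
  simp only [picardFuchsOp_apply, ← mul_aeval_eulerOp hE]
  ring

theorem map_picardFuchsOp (g : R →+* S) (Λ f : R⟦X⟧) :
    map g (picardFuchsOp n d z Λ f) = picardFuchsOp n d (g z) (map g Λ) (map g f) := by
  rw [picardFuchsOp_apply, picardFuchsOp_apply, map_sub, map_mul, map_X, map_aeval_eulerOp,
    map_aeval_eulerOp, map_picardFuchsPoly]
  simp

theorem picardFuchsOp_zero (Λ f : R⟦X⟧) : picardFuchsOp n d 0 Λ f =
    (Λ ^ n - 1 - ((∏ k, d k ^ d k : ℕ) : R⟦X⟧) * X * Λ ^ ∑ k, d k) * f := by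
  rw [picardFuchsOp_apply, eulerOp_zero, Polynomial.aeval_algHom_apply,
    Polynomial.aeval_algHom_apply, aeval_picardFuchsPoly_zero, map_sub, map_pow,
    Polynomial.aeval_X, map_one]
  simp only [Algebra.coe_lmul_eq_mul, LinearMap.mul_apply_apply, Nat.cast_prod, Nat.cast_pow]
  ring

end PicardFuchs

theorem dQ_eq_derivative (f : ℚ⟦X⟧) : dQ f = d⁄dX ℚ f := by
  ext k
  simp [dQ, coeff_derivative, mul_comm]

theorem one_add_mul_Zl_pow_sub_one_ne_zero {n j : ℕ} (hn : n ≠ 0) (hj : j ≠ 0) :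
    (1 + (j : LaurentSeries ℚ) * Zl) ^ n - 1 ≠ 0 := by
  have hy : C (j : ℚ) * X ≠ 0 :=
    mul_ne_zero ((map_ne_zero_iff _ C_injective).2 (Nat.cast_ne_zero.2 hj)) X_ne_zero
  have := (map_ne_zero_iff _ (HahnSeries.ofPowerSeries_injective (Γ := ℤ))).2
    (one_add_pow_sub_one_ne_zero hy (by simp) hn)
  simpa [Zl] using this

theorem picardFuchsOp_Zl_one_eq_zero {n r : ℕ} {d : Fin r → ℕ} (hn : n ≠ 0)
    {φ : (LaurentSeries ℚ)⟦X⟧}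
    (hφ : ∀ β : ℕ, coeff β φ =
      (∏ k : Fin r, ∏ i ∈ Finset.range (d k * β),
          ((d k : LaurentSeries ℚ) + ((i + 1 : ℕ) : LaurentSeries ℚ) * Zl)) /
        ∏ j ∈ Finset.range β, ((1 + ((j + 1 : ℕ) : LaurentSeries ℚ) * Zl) ^ n - 1)) :
    picardFuchsOp n d Zl 1 φ = 0 := by
  refine PowerSeries.ext fun β => ?_
  rcases β with _ | γ
  · rw [coeff_zero_picardFuchsOp_one, map_zero]
  have hnum : ∏ k : Fin r, ∏ i ∈ Finset.range (d k * (γ + 1)),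
      ((d k : LaurentSeries ℚ) + ((i + 1 : ℕ) : LaurentSeries ℚ) * Zl) =
      (∏ k : Fin r, ∏ i ∈ Finset.range (d k * γ),
        ((d k : LaurentSeries ℚ) + ((i + 1 : ℕ) : LaurentSeries ℚ) * Zl)) *
      (picardFuchsPoly d Zl).eval (1 + γ * Zl) := by
    rw [eval_picardFuchsPoly, ← Finset.prod_mul_distrib]
    refine Finset.prod_congr rfl fun k _ => ?_
    rw [mul_add_one, Finset.prod_range_add]
    congr 1
    refine Finset.prod_congr rfl fun s _ => ?_
    push_cast
    ring
  have hden := Finset.prod_range_succ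
    (fun j => (1 + ((j + 1 : ℕ) : LaurentSeries ℚ) * Zl) ^ n - 1) γ
  have hB := one_add_mul_Zl_pow_sub_one_ne_zero hn (Nat.succ_ne_zero γ)
  rw [coeff_succ_picardFuchsOp_one, hφ, hφ, hnum, hden, map_zero]
  field_simp
  ring

section Exp

variable {μ : ℚ⟦X⟧} {E : (LaurentSeries ℚ)⟦X⟧}

theorem eq_exp_subst_of_coeff (hμ0 : constantCoeff μ = 0)
    (hE : ∀ β : ℕ, coeff β E = ∑ k ∈ Finset.range (β + 1),
      HahnSeries.single (-(k : ℤ)) (coeff β ((-μ) ^ k) / (k.factorial : ℚ))) :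
    E = (exp (LaurentSeries ℚ)).subst (C (HahnSeries.single (-1) 1) * map HahnSeries.C (-μ)) := by
  refine PowerSeries.ext fun β => ?_
  rw [hE, coeff_exp_subst (constantCoeff_C_mul_map _ _ (by simp [hμ0]))]
  refine Finset.sum_congr rfl fun k _ => ?_
  simp only [mul_pow, ← map_pow, coeff_C_mul, coeff_map]
  rw [Subsingleton.elim (algebraMap ℚ (LaurentSeries ℚ)) HahnSeries.C, HahnSeries.single_pow,
    HahnSeries.C_apply, HahnSeries.C_apply, HahnSeries.single_mul_single,
    HahnSeries.single_mul_single]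
  simp [div_eq_inv_mul]

theorem Zl_smul_X_mul_derivative_of_coeff (hμ0 : constantCoeff μ = 0)
    (hE : ∀ β : ℕ, coeff β E = ∑ k ∈ Finset.range (β + 1),
      HahnSeries.single (-(k : ℤ)) (coeff β ((-μ) ^ k) / (k.factorial : ℚ))) :
    Zl • (X * d⁄dX (LaurentSeries ℚ) E) = -(map HahnSeries.C (X * dQ μ) * E) := by
  have hZl : C Zl * C (HahnSeries.single (-1) (1 : ℚ)) = (1 : (LaurentSeries ℚ)⟦X⟧) := by
    rw [← map_mul, Zl, HahnSeries.single_mul_single]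
    simp
  have hda : d⁄dX _ (C (HahnSeries.single (-1) (1 : ℚ)) * map HahnSeries.C (-μ)) =
      -(C (HahnSeries.single (-1) 1) * map HahnSeries.C (d⁄dX ℚ μ)) := by
    rw [← smul_eq_C_mul, Derivation.map_smul, ← map_derivative, map_neg, map_neg, smul_neg,
      smul_eq_C_mul]
  rw [eq_exp_subst_of_coeff hμ0 hE,
    derivative_exp_subst (constantCoeff_C_mul_map _ _ (by simp [hμ0])), hda, dQ_eq_derivative,
    smul_eq_C_mul, map_mul, map_X]
  generalize (exp (LaurentSeries ℚ)).subst
    (C (HahnSeries.single (-1) (1 : ℚ)) * map HahnSeries.C (-μ)) = S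
  linear_combination (-(X * S * map HahnSeries.C (d⁄dX ℚ μ))) * hZl

end Exp

theorem stmt1_general (n r : ℕ) (d : Fin r → ℕ)
    (m D : ℕ) (hm : m = ∑ k, d k) (hD : D = ∏ k, d k ^ d k) (hmn : m < n)
    (μ : PowerSeries ℚ) (hμ0 : PowerSeries.constantCoeff (R := ℚ) μ = 0)
    -- the series φ(z,q)
    (φ : PowerSeries (LaurentSeries ℚ))
    (hφ : ∀ β : ℕ, PowerSeries.coeff (R := LaurentSeries ℚ) β φ =
      (∏ k : Fin r, ∏ i ∈ Finset.range (d k * β),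
          ((d k : LaurentSeries ℚ) + ((i + 1 : ℕ) : LaurentSeries ℚ) * Zl)) /
        ∏ j ∈ Finset.range β, ((1 + ((j + 1 : ℕ) : LaurentSeries ℚ) * Zl) ^ n - 1))
    -- the series e^{-μ(q)/z}
    (E : PowerSeries (LaurentSeries ℚ))
    (hE : ∀ β : ℕ, PowerSeries.coeff (R := LaurentSeries ℚ) β E =
      ∑ k ∈ Finset.range (β + 1),
        HahnSeries.single (-(k : ℤ)) (PowerSeries.coeff (R := ℚ) β ((-μ) ^ k) / (Nat.factorial k : ℚ)))
    -- regularizability: every q-coefficient of e^{-μ/z}·φ has no negative powers of z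
    (hreg : ∀ β : ℕ, ∀ j : ℤ, j < 0 →
      (PowerSeries.coeff (R := LaurentSeries ℚ) β (E * φ)).coeff j = 0)
    (L : PowerSeries ℚ) (hL : L = 1 + PowerSeries.X * dQ μ) :
    L ^ n - (D : PowerSeries ℚ) * PowerSeries.X * L ^ m = 1 := by
  have hEφ : picardFuchsOp n d Zl (map HahnSeries.C L) (E * φ) = 0 := by
    rw [hL, map_add, map_one, ← mul_picardFuchsOp (Zl_smul_X_mul_derivative_of_coeff hμ0 hE),
      picardFuchsOp_Zl_one_eq_zero (by omega) hφ, mul_zero]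
  obtain ⟨W, hW⟩ := exists_map_ofPowerSeries_eq hreg
  have hC : (HahnSeries.ofPowerSeries ℤ ℚ).comp C = HahnSeries.C :=
    RingHom.ext HahnSeries.ofPowerSeries_C
  have hWeq : picardFuchsOp n d X (map C L) W = 0 := by
    refine map_injective _ (HahnSeries.ofPowerSeries_injective (Γ := ℤ)) ?_
    rw [map_picardFuchsOp, ← RingHom.comp_apply (map _) (map C), ← map_comp, hC,
      HahnSeries.ofPowerSeries_X, map_zero, hW]
    exact hEφ
  have hLeq := congrArg (map constantCoeff) hWeq
  rw [map_picardFuchsOp, ← RingHom.comp_apply (map _) (map C), ← map_comp, constantCoeff_comp_C,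
    map_id, id_eq, constantCoeff_X, picardFuchsOp_zero, map_zero, ← hm, ← hD] at hLeq
  have hW0 : constantCoeff W = 1 := by
    refine HahnSeries.ofPowerSeries_injective (Γ := ℤ) ?_
    rw [← coeff_zero_eq_constantCoeff_apply, ← coeff_map, hW, coeff_zero_eq_constantCoeff_apply,
      map_mul, ← coeff_zero_eq_constantCoeff_apply, ← coeff_zero_eq_constantCoeff_apply, hE, hφ]
    simp
  have hw : map constantCoeff W ≠ 0 := fun h => by
    have := congrArg (coeff 0) h
    rw [coeff_map, coeff_zero_eq_constantCoeff_apply, hW0, map_one, map_zero] at this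
    exact one_ne_zero this
  linear_combination (mul_eq_zero.1 hLeq).resolve_right hw

theorem stmt1 (n r : ℕ) (hr : 1 ≤ r) (d : Fin r → ℕ) (hd : ∀ k, 2 ≤ d k)
    (m D : ℕ) (hm : m = ∑ k, d k) (hD : D = ∏ k, d k ^ d k) (hmn : m < n)
    (μ : PowerSeries ℚ) (hμ0 : PowerSeries.constantCoeff (R := ℚ) μ = 0)
    -- the series φ(z,q)
    (φ : PowerSeries (LaurentSeries ℚ))
    (hφ : ∀ β : ℕ, PowerSeries.coeff (R := LaurentSeries ℚ) β φ =
      (∏ k : Fin r, ∏ i ∈ Finset.range (d k * β),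
          ((d k : LaurentSeries ℚ) + ((i + 1 : ℕ) : LaurentSeries ℚ) * Zl)) /
        ∏ j ∈ Finset.range β, ((1 + ((j + 1 : ℕ) : LaurentSeries ℚ) * Zl) ^ n - 1))
    -- the series e^{-μ(q)/z}
    (E : PowerSeries (LaurentSeries ℚ))
    (hE : ∀ β : ℕ, PowerSeries.coeff (R := LaurentSeries ℚ) β E =
      ∑ k ∈ Finset.range (β + 1),
        HahnSeries.single (-(k : ℤ)) (PowerSeries.coeff (R := ℚ) β ((-μ) ^ k) / (Nat.factorial k : ℚ)))
    -- regularizability: every q-coefficient of e^{-μ/z}·φ has no negative powers of z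
    (hreg : ∀ β : ℕ, ∀ j : ℤ, j < 0 →
      (PowerSeries.coeff (R := LaurentSeries ℚ) β (E * φ)).coeff j = 0)
    (L : PowerSeries ℚ) (hL : L = 1 + PowerSeries.X * dQ μ) :
    L ^ n - (D : PowerSeries ℚ) * PowerSeries.X * L ^ m = 1 :=
  stmt1_general n r d m D hm hD hmn μ hμ0 φ hφ E hE hreg L hL
end

section
/- (a) For all integers p, β ≥ 0, the coefficient of q^β in tilde𝔉_p(w,q) lies in w^{νβ−p}·ℚ[[w]], i.e. its order at w = 0 is at least νβ − p. (b) For all integers p, β ≥ 0, the coefficient of q^β in tilde𝔉_p(w,q) − 𝔉_p(w,q) lies in w^{n−p}·ℚ[[w]], i.e. its order at w = 0 is at least n − p. -/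
/-- The coefficients `c_{p,l}^{(β)}`. -/
noncomputable def ccoef (n r : ℕ) (d : Fin r → ℕ) (p β : ℕ) (l : ℤ) : ℚ :=
  if l < 0 then 0 else
    PowerSeries.coeff l.toNat
      (((PowerSeries.X + (β : PowerSeries ℚ)) ^ p *
          ∏ k : Fin r, ∏ i ∈ Finset.range (d k * β),
            ((d k : PowerSeries ℚ) * PowerSeries.X + ((i + 1 : ℕ) : PowerSeries ℚ))) *
        (∏ j ∈ Finset.range β, (PowerSeries.X + ((j + 1 : ℕ) : PowerSeries ℚ)) ^ n)⁻¹)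

/-- The operator `𝐃 = 1 + (q/w)·d/dq` on q-series with Laurent-series coefficients. -/
noncomputable def Dop (H : PowerSeries (LaurentSeries ℚ)) : PowerSeries (LaurentSeries ℚ) :=
  PowerSeries.mk fun β =>
    (1 + HahnSeries.single (-1 : ℤ) ((β : ℕ) : ℚ)) * PowerSeries.coeff β H

/-!
Everything is an estimate for the `w`-adic valuation. In the `q^β`-coefficient of `tilde𝔉_p`, the
term indexed by `(β₁, l)` is `w^{-(p-νβ₁-l)}`, times `(1 + (β-β₁)/w)^l`, of order `≥ -l`, times the
`q^{β-β₁}`-coefficient of `tilde𝔉`, of order `≥ ν(β-β₁)` because its numerator is divisible by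
`w^{ν(β-β₁)}` and its denominator is a unit of `ℚ[[w]]`; the orders add up to `νβ - p`.
Since `𝔉_p` depends linearly on `𝔉`, part (b) is the same estimate applied to `tilde𝔉 - 𝔉`. Its
`q^γ`-coefficient is `N (B - A) / (A B)`, of order `≥ νγ + n`: the denominators `A`, `B` are units
and `B ≡ A mod w^n`, because their factors `(w+j)^n` and `(w+j)^n - w^n` agree modulo `w^n`.
-/

namespace AddValuation

variable {R Γ₀ : Type*} [CommRing R] [LinearOrderedAddCommMonoidWithTop Γ₀] (v : AddValuation R Γ₀)

theorem map_prod_nonneg {ι : Type*} (s : Finset ι) {f : ι → R} (hf : ∀ i ∈ s, 0 ≤ v (f i)) :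
    0 ≤ v (∏ i ∈ s, f i) :=
  Finset.prod_induction f (fun x => 0 ≤ v x)
    (fun x y hx hy => by rw [v.map_mul]; exact add_nonneg hx hy) (by rw [v.map_one]) hf

theorem map_prod_eq_zero {ι : Type*} (s : Finset ι) {f : ι → R} (hf : ∀ i ∈ s, v (f i) = 0) :
    v (∏ i ∈ s, f i) = 0 :=
  Finset.prod_induction f (fun x => v x = 0)
    (fun x y hx hy => by rw [v.map_mul, hx, hy, add_zero]) v.map_one hf

theorem le_map_prod_sub_prod {ι : Type*} (s : Finset ι) {f g : ι → R} {t : Γ₀}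
    (hf : ∀ i ∈ s, 0 ≤ v (f i)) (hg : ∀ i ∈ s, 0 ≤ v (g i))
    (hfg : ∀ i ∈ s, t ≤ v (f i - g i)) :
    t ≤ v (∏ i ∈ s, f i - ∏ i ∈ s, g i) := by
  classical
  induction s using Finset.induction_on with
  | empty => simp
  | insert a s ha ih =>
    simp only [Finset.forall_mem_insert] at hf hg hfg
    rw [Finset.prod_insert ha, Finset.prod_insert ha,
      show f a * ∏ i ∈ s, f i - g a * ∏ i ∈ s, g i =
        (f a - g a) * ∏ i ∈ s, f i + g a * (∏ i ∈ s, f i - ∏ i ∈ s, g i) by ring]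
    refine v.map_le_add ?_ ?_
    · simpa [v.map_mul] using add_le_add hfg.1 (v.map_prod_nonneg s hf.2)
    · simpa [v.map_mul] using add_le_add hg.1 (ih hf.2 hg.2 hfg.2)

end AddValuation

theorem AddValuation.map_div_sub_div {K Γ₀ : Type*} [Field K]
    [LinearOrderedAddCommGroupWithTop Γ₀] (v : AddValuation K Γ₀) (x : K) {a b : K}
    (ha : v a = 0) (hb : v b = 0) :
    v (x / a - x / b) = v x + v (b - a) := by
  have ha0 : a ≠ 0 := fun h => by simp [h] at ha
  have hb0 : b ≠ 0 := fun h => by simp [h] at hb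
  rw [div_sub_div _ _ ha0 hb0, show x * b - a * x = x * (b - a) by ring, v.map_div, v.map_mul,
    v.map_mul, ha, hb, add_zero, sub_zero]

theorem HahnSeries.coeff_eq_zero_of_lt_of_le_addVal {Γ R : Type*} [AddCancelCommMonoid Γ]
    [LinearOrder Γ] [IsOrderedCancelAddMonoid Γ] [Ring R] [IsDomain R] {x : HahnSeries Γ R}
    {i g : Γ} (hi : i < g) (hg : (g : WithTop Γ) ≤ HahnSeries.addVal Γ R x) : x.coeff i = 0 :=
  HahnSeries.coeff_eq_zero_of_lt_orderTop
    ((WithTop.coe_lt_coe.2 hi).trans_le (by rwa [HahnSeries.addVal_apply] at hg))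

open HahnSeries

local notation "ord" => HahnSeries.addVal ℤ ℚ

theorem addVal_Zl : ord Zl = 1 := by
  rw [addVal_apply, Zl, orderTop_single one_ne_zero]
  rfl

theorem addVal_Zl_pow (k : ℕ) : ord (Zl ^ k) = ((k : ℤ) : WithTop ℤ) := by
  rw [AddValuation.map_pow, addVal_Zl, ← WithTop.coe_one, ← WithTop.coe_nsmul, nsmul_one]

theorem addVal_natCast_nonneg (k : ℕ) : 0 ≤ ord (k : LaurentSeries ℚ) := by
  rw [addVal_apply, ← single_zero_natCast]
  exact orderTop_single_le

theorem addVal_Zl_add_natCast_succ_pow (j n : ℕ) :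
    ord ((Zl + ((j + 1 : ℕ) : LaurentSeries ℚ)) ^ n) = 0 := by
  have hconst : ord ((j + 1 : ℕ) : LaurentSeries ℚ) = 0 := by
    rw [addVal_apply, ← single_zero_natCast, orderTop_single (by positivity)]
    rfl
  have hlt : ord ((j + 1 : ℕ) : LaurentSeries ℚ) < ord Zl := by
    rw [hconst, addVal_Zl]
    exact zero_lt_one
  rw [AddValuation.map_pow, AddValuation.map_add_eq_of_lt_right _ hlt, hconst, nsmul_zero]

theorem addVal_prod_Zl_add_natCast_succ_pow (n β : ℕ) :
    ord (∏ j ∈ Finset.range β, (Zl + ((j + 1 : ℕ) : LaurentSeries ℚ)) ^ n) = 0 :=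
  AddValuation.map_prod_eq_zero _ _ fun j _ => addVal_Zl_add_natCast_succ_pow j n

theorem addVal_prod_Zl_add_natCast_succ_pow_sub {n : ℕ} (hn : n ≠ 0) (β : ℕ) :
    ord (∏ j ∈ Finset.range β, ((Zl + ((j + 1 : ℕ) : LaurentSeries ℚ)) ^ n - Zl ^ n)) = 0 :=
  AddValuation.map_prod_eq_zero _ _ fun j _ => by
    have hlt : ord ((Zl + ((j + 1 : ℕ) : LaurentSeries ℚ)) ^ n) < ord (Zl ^ n) := by
      rw [addVal_Zl_add_natCast_succ_pow, addVal_Zl_pow]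
      exact_mod_cast Nat.pos_of_ne_zero hn
    rw [AddValuation.map_sub_eq_of_lt_left _ hlt, addVal_Zl_add_natCast_succ_pow]

theorem le_addVal_prod_Zl_add_natCast_succ_pow_sub_prod (n β : ℕ) :
    ((n : ℤ) : WithTop ℤ) ≤
      ord (∏ j ∈ Finset.range β, (Zl + ((j + 1 : ℕ) : LaurentSeries ℚ)) ^ n -
        ∏ j ∈ Finset.range β, ((Zl + ((j + 1 : ℕ) : LaurentSeries ℚ)) ^ n - Zl ^ n)) := by
  refine AddValuation.le_map_prod_sub_prod _ _ (fun j _ => ?_) (fun j _ => ?_) fun j _ => ?_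
  · rw [addVal_Zl_add_natCast_succ_pow]
  · refine AddValuation.map_le_sub _ (addVal_Zl_add_natCast_succ_pow j n).ge ?_
    rw [addVal_Zl_pow]
    exact_mod_cast Int.natCast_nonneg n
  · rw [sub_sub_cancel, addVal_Zl_pow]

theorem le_addVal_Zl_pow_mul_prod (r : ℕ) (d : Fin r → ℕ) (β e : ℕ) :
    ((e : ℤ) : WithTop ℤ) ≤ ord (Zl ^ e * ∏ k : Fin r, ∏ i ∈ Finset.range (d k * β),
      ((d k : LaurentSeries ℚ) * Zl + ((i + 1 : ℕ) : LaurentSeries ℚ))) := by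
  rw [AddValuation.map_mul, addVal_Zl_pow]
  refine le_add_of_nonneg_right (AddValuation.map_prod_nonneg _ _ fun k _ =>
    AddValuation.map_prod_nonneg _ _ fun i _ =>
      AddValuation.map_le_add _ ?_ (addVal_natCast_nonneg _))
  rw [AddValuation.map_mul, addVal_Zl]
  exact add_nonneg (addVal_natCast_nonneg _) zero_le_one

theorem coeff_iterate_Dop (l β : ℕ) (H : PowerSeries (LaurentSeries ℚ)) :
    PowerSeries.coeff β (Dop^[l] H) =
      (1 + single (-1 : ℤ) (β : ℚ)) ^ l * PowerSeries.coeff β H := by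
  induction l with
  | zero => simp
  | succ l ih =>
    rw [Function.iterate_succ_apply', Dop, PowerSeries.coeff_mk, ih, pow_succ', mul_assoc]

theorem iterate_Dop_sub (l : ℕ) (G H : PowerSeries (LaurentSeries ℚ)) :
    Dop^[l] (G - H) = Dop^[l] G - Dop^[l] H := by
  ext β
  simp only [coeff_iterate_Dop, map_sub, mul_sub]

theorem le_addVal_one_add_single_pow (k l : ℕ) :
    ((-l : ℤ) : WithTop ℤ) ≤ ord ((1 + single (-1 : ℤ) (k : ℚ)) ^ l) := by
  have h : ((-1 : ℤ) : WithTop ℤ) ≤ ord (1 + single (-1 : ℤ) (k : ℚ)) := by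
    refine AddValuation.map_le_add _ ?_ ?_
    · rw [AddValuation.map_one]
      exact_mod_cast (by norm_num : (-1 : ℤ) ≤ 0)
    · rw [addVal_apply]
      exact orderTop_single_le
  rw [AddValuation.map_pow, show (-l : ℤ) = l • (-1 : ℤ) by simp, WithTop.coe_nsmul]
  exact nsmul_le_nsmul_right h l

/-- `∑_{β,l} a_{l,β} q^β w^{-(p-νβ-l)} 𝐃^l H`; with `a = c̃_p` and `H = 𝔉` this is `𝔉_p`. -/
noncomputable def DopCombination (ν : ℕ) (a : ℤ → ℕ → ℚ) (p : ℕ)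
    (H : PowerSeries (LaurentSeries ℚ)) : PowerSeries (LaurentSeries ℚ) :=
  ∑ β ∈ Finset.range (p / ν + 1), ∑ l ∈ Finset.range (p - ν * β + 1),
    PowerSeries.C (single (-((p : ℤ) - (ν : ℤ) * (β : ℤ) - (l : ℤ))) (a (l : ℤ) β)) *
      PowerSeries.X ^ β * Dop^[l] H

theorem DopCombination_sub (ν : ℕ) (a : ℤ → ℕ → ℚ) (p : ℕ)
    (G H : PowerSeries (LaurentSeries ℚ)) :
    DopCombination ν a p (G - H) = DopCombination ν a p G - DopCombination ν a p H := by
  simp only [DopCombination, iterate_Dop_sub, mul_sub, Finset.sum_sub_distrib]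

theorem le_addVal_coeff_DopCombination (ν : ℕ) (a : ℤ → ℕ → ℚ) (p : ℕ)
    {H : PowerSeries (LaurentSeries ℚ)} {c : ℤ}
    (hH : ∀ γ : ℕ, ((c + ν * γ : ℤ) : WithTop ℤ) ≤ ord (PowerSeries.coeff γ H)) (β : ℕ) :
    ((c + ν * β - p : ℤ) : WithTop ℤ) ≤ ord (PowerSeries.coeff β (DopCombination ν a p H)) := by
  rw [DopCombination, map_sum]
  refine AddValuation.map_le_sum _ fun β₁ _ => ?_
  rw [map_sum]
  refine AddValuation.map_le_sum _ fun l _ => ?_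
  rw [mul_assoc, PowerSeries.coeff_C_mul, PowerSeries.coeff_X_pow_mul', coeff_iterate_Dop]
  split_ifs with hβ
  · obtain ⟨γ, rfl⟩ := Nat.exists_eq_add_of_le hβ
    rw [Nat.add_sub_cancel_left, AddValuation.map_mul, AddValuation.map_mul]
    calc ((c + ν * (β₁ + γ : ℕ) - p : ℤ) : WithTop ℤ)
        = ((-((p : ℤ) - ν * β₁ - l) + (-l + (c + ν * γ)) : ℤ) : WithTop ℤ) := by
          congr 1; push_cast; ring
      _ ≤ _ := by
          rw [WithTop.coe_add, WithTop.coe_add]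
          refine add_le_add ?_ (add_le_add (le_addVal_one_add_single_pow γ l) (hH γ))
          rw [addVal_apply]
          exact orderTop_single_le
  · simp

theorem stmt10_general (n r : ℕ) (d : Fin r → ℕ)
    (m : ℕ) (ν : ℕ) (hmn : m < n)
    -- the coefficients c̃_{p,l}^{(β)}
    (ct : ℕ → ℤ → ℕ → ℚ)
    -- the series tilde𝔉(w,q) and 𝔉(w,q)
    (tF F : PowerSeries (LaurentSeries ℚ))
    (htF : ∀ β : ℕ, PowerSeries.coeff β tF =
      Zl ^ (ν * β) *
        (∏ k : Fin r, ∏ i ∈ Finset.range (d k * β),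
          ((d k : LaurentSeries ℚ) * Zl + ((i + 1 : ℕ) : LaurentSeries ℚ))) /
        ∏ j ∈ Finset.range β, ((Zl + ((j + 1 : ℕ) : LaurentSeries ℚ)) ^ n - Zl ^ n))
    (hF : ∀ β : ℕ, PowerSeries.coeff β F =
      Zl ^ (ν * β) *
        (∏ k : Fin r, ∏ i ∈ Finset.range (d k * β),
          ((d k : LaurentSeries ℚ) * Zl + ((i + 1 : ℕ) : LaurentSeries ℚ))) /
        ∏ j ∈ Finset.range β, (Zl + ((j + 1 : ℕ) : LaurentSeries ℚ)) ^ n)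
    -- tilde𝔉_p(w,q) and 𝔉_p(w,q)
    (tFp Fp : ℕ → PowerSeries (LaurentSeries ℚ))
    (htFp : ∀ p : ℕ, tFp p =
      ∑ β ∈ Finset.range (p / ν + 1), ∑ l ∈ Finset.range (p - ν * β + 1),
        PowerSeries.C
            (HahnSeries.single (-((p : ℤ) - (ν : ℤ) * (β : ℤ) - (l : ℤ))) (ct p (l : ℤ) β)) *
          PowerSeries.X ^ β * Dop^[l] tF)
    (hFp : ∀ p : ℕ, Fp p =
      ∑ β ∈ Finset.range (p / ν + 1), ∑ l ∈ Finset.range (p - ν * β + 1),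
        PowerSeries.C
            (HahnSeries.single (-((p : ℤ) - (ν : ℤ) * (β : ℤ) - (l : ℤ))) (ct p (l : ℤ) β)) *
          PowerSeries.X ^ β * Dop^[l] F) :
    -- (a) the q^β-coefficient of tilde𝔉_p has w-order at least νβ − p
    (∀ (p β : ℕ) (j : ℤ), j < (ν : ℤ) * (β : ℤ) - (p : ℤ) →
      (PowerSeries.coeff β (tFp p)).coeff j = 0)
    ∧
    -- (b) the q^β-coefficient of tilde𝔉_p − 𝔉_p has w-order at least n − p
    (∀ (p β : ℕ) (j : ℤ), j < (n : ℤ) - (p : ℤ) →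
      (PowerSeries.coeff β (tFp p - Fp p)).coeff j = 0) := by
  have hn : n ≠ 0 := by omega
  have htF_ord (γ : ℕ) : ((0 + ν * γ : ℤ) : WithTop ℤ) ≤ ord (PowerSeries.coeff γ tF) := by
    rw [htF, AddValuation.map_div, addVal_prod_Zl_add_natCast_succ_pow_sub hn, sub_zero, zero_add]
    exact_mod_cast le_addVal_Zl_pow_mul_prod r d γ (ν * γ)
  have hdiff_ord (γ : ℕ) :
      ((n + ν * γ : ℤ) : WithTop ℤ) ≤ ord (PowerSeries.coeff γ (tF - F)) := by
    rw [map_sub, htF, hF, AddValuation.map_div_sub_div _ _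
      (addVal_prod_Zl_add_natCast_succ_pow_sub hn γ) (addVal_prod_Zl_add_natCast_succ_pow n γ),
      add_comm, WithTop.coe_add]
    exact add_le_add (mod_cast le_addVal_Zl_pow_mul_prod r d γ (ν * γ))
      (le_addVal_prod_Zl_add_natCast_succ_pow_sub_prod n γ)
  have htFp' (p : ℕ) : tFp p = DopCombination ν (ct p) p tF := htFp p
  have hFp' (p : ℕ) : Fp p = DopCombination ν (ct p) p F := hFp p
  refine ⟨fun p β j hj => ?_, fun p β j hj => ?_⟩
  · rw [htFp']
    exact coeff_eq_zero_of_lt_of_le_addVal (by omega)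
      (le_addVal_coeff_DopCombination ν (ct p) p htF_ord β)
  · rw [htFp', hFp', ← DopCombination_sub]
    exact coeff_eq_zero_of_lt_of_le_addVal (by nlinarith)
      (le_addVal_coeff_DopCombination ν (ct p) p hdiff_ord β)

theorem stmt10 (n r : ℕ) (hr : 1 ≤ r) (d : Fin r → ℕ) (hd : ∀ k, 2 ≤ d k)
    (m D : ℕ) (hm : m = ∑ k, d k) (hD : D = ∏ k, d k ^ d k)
    (ν : ℕ) (hν : ν = n - m) (hmn : m < n)
    -- the coefficients c̃_{p,l}^{(β)}
    (ct : ℕ → ℤ → ℕ → ℚ)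
    (hct0 : ∀ (p : ℕ) (l : ℤ), ct p l 0 = if l = (p : ℤ) then 1 else 0)
    (hctz : ∀ (p : ℕ) (l : ℤ) (β : ℕ),
      (l < 0 ∨ (p : ℤ) - (ν : ℤ) * (β : ℤ) < l) → ct p l β = 0)
    (hctrec : ∀ (p : ℕ) (l : ℤ) (β : ℕ), 1 ≤ β → 0 ≤ l → l ≤ (p : ℤ) - (ν : ℤ) * (β : ℤ) →
      ct p l β = -∑ β₁ ∈ Finset.range β, ∑ k ∈ Finset.Icc (0 : ℤ) ((p : ℤ) - (ν : ℤ) * (β₁ : ℤ)),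
        ct p k β₁ * ccoef n r d k.toNat (β - β₁) l)
    -- the series tilde𝔉(w,q) and 𝔉(w,q)
    (tF F : PowerSeries (LaurentSeries ℚ))
    (htF : ∀ β : ℕ, PowerSeries.coeff β tF =
      Zl ^ (ν * β) *
        (∏ k : Fin r, ∏ i ∈ Finset.range (d k * β),
          ((d k : LaurentSeries ℚ) * Zl + ((i + 1 : ℕ) : LaurentSeries ℚ))) /
        ∏ j ∈ Finset.range β, ((Zl + ((j + 1 : ℕ) : LaurentSeries ℚ)) ^ n - Zl ^ n))
    (hF : ∀ β : ℕ, PowerSeries.coeff β F =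
      Zl ^ (ν * β) *
        (∏ k : Fin r, ∏ i ∈ Finset.range (d k * β),
          ((d k : LaurentSeries ℚ) * Zl + ((i + 1 : ℕ) : LaurentSeries ℚ))) /
        ∏ j ∈ Finset.range β, (Zl + ((j + 1 : ℕ) : LaurentSeries ℚ)) ^ n)
    -- tilde𝔉_p(w,q) and 𝔉_p(w,q)
    (tFp Fp : ℕ → PowerSeries (LaurentSeries ℚ))
    (htFp : ∀ p : ℕ, tFp p =
      ∑ β ∈ Finset.range (p / ν + 1), ∑ l ∈ Finset.range (p - ν * β + 1),
        PowerSeries.C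
            (HahnSeries.single (-((p : ℤ) - (ν : ℤ) * (β : ℤ) - (l : ℤ))) (ct p (l : ℤ) β)) *
          PowerSeries.X ^ β * Dop^[l] tF)
    (hFp : ∀ p : ℕ, Fp p =
      ∑ β ∈ Finset.range (p / ν + 1), ∑ l ∈ Finset.range (p - ν * β + 1),
        PowerSeries.C
            (HahnSeries.single (-((p : ℤ) - (ν : ℤ) * (β : ℤ) - (l : ℤ))) (ct p (l : ℤ) β)) *
          PowerSeries.X ^ β * Dop^[l] F) :
    -- (a) the q^β-coefficient of tilde𝔉_p has w-order at least νβ − p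
    (∀ (p β : ℕ) (j : ℤ), j < (ν : ℤ) * (β : ℤ) - (p : ℤ) →
      (PowerSeries.coeff β (tFp p)).coeff j = 0)
    ∧
    -- (b) the q^β-coefficient of tilde𝔉_p − 𝔉_p has w-order at least n − p
    (∀ (p β : ℕ) (j : ℤ), j < (n : ℤ) - (p : ℤ) →
      (PowerSeries.coeff β (tFp p - Fp p)).coeff j = 0) :=
  stmt10_general n r d m ν hmn ct tF F htF hF tFp Fp htFp hFp
end

section
/- Let ζ be a primitive n-th root of unity in the cyclotomic field K = ℚ(ζ), and let ev_ζ : ℚ[α_1,…,α_n][[q]] → K[[q]] be the evaluation sending α_k to ζ^k. Assume 0 ≤ p ≤ n−1. Then for all integers b ≥ 0 and 0 ≤ s ≤ p − b: (i) if ν does not divide b, then ev_ζ(𝒞̃_{p,s}^{(b)}) = 0; (ii) if b = νγ for some integer γ ≥ 0, then ev_ζ(𝒞̃_{p,s}^{(b)}) = c̃_{p,s}^{(γ)} · q^γ. -/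
open PowerSeries
open scoped Polynomial PowerSeries

section General

variable {R : Type*} [CommRing R]

theorem Finset.dvd_prod_sub_prod_sub {ι : Type*} (s : Finset ι) (f : ι → R) (c : R) :
    c ∣ ∏ i ∈ s, f i - ∏ i ∈ s, (f i - c) := by
  rw [← Ideal.mem_span_singleton, ← Ideal.Quotient.eq, map_prod, map_prod]
  refine prod_congr rfl fun i _ => ?_
  rw [map_sub, Ideal.Quotient.eq_zero_iff_mem.mpr (Ideal.mem_span_singleton_self c), sub_zero]

theorem dvd_sub_of_mul_eq_mul {u v x y c : R} (hu : IsUnit u) (huv : c ∣ u - v)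
    (h : v * x = u * y) : c ∣ x - y := by
  rw [← hu.dvd_mul_right]
  have : (x - y) * u = (u - v) * x := by linear_combination h
  exact this ▸ huv.mul_right x

theorem IsPrimitiveRoot.prod_sub_pow_succ_mul [IsDomain R] {ζ : R} {n : ℕ}
    (hζ : IsPrimitiveRoot ζ n) (hn : 0 < n) (x y : R) :
    ∏ k : Fin n, (x - ζ ^ ((k : ℕ) + 1) * y) = x ^ n - y ^ n := by
  have h := congrArg (Polynomial.eval x)
    (X_pow_sub_C_eq_prod hζ hn (α := ζ * y) (by rw [mul_pow, hζ.pow_eq_one, one_mul]))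
  simp only [Polynomial.eval_sub, Polynomial.eval_pow, Polynomial.eval_X, Polynomial.eval_C,
    Polynomial.eval_prod] at h
  rw [h, Fin.prod_univ_eq_prod_range (fun k => x - ζ ^ (k + 1) * y)]
  simp only [pow_succ, mul_assoc]

theorem Finset.sum_range_mul_of_not_dvd {M : Type*} [AddCommMonoid M] {ν : ℕ} (hν : 0 < ν)
    (f : ℕ → M) (hf : ∀ i, ¬ν ∣ i → f i = 0) (γ : ℕ) :
    ∑ i ∈ range (ν * γ), f i = ∑ j ∈ range γ, f (ν * j) := by
  induction γ with
  | zero => simp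
  | succ γ ih =>
    rw [Nat.mul_succ, sum_range_add, ih, sum_range_succ,
      sum_eq_single_of_mem 0 (mem_range.mpr hν), add_zero]
    intro i hi hi0
    refine hf _ fun hdvd => Nat.not_dvd_of_pos_of_lt (Nat.pos_of_ne_zero hi0)
      (mem_range.mp hi) ?_
    exact (Nat.dvd_add_right (dvd_mul_right ν γ)).mp hdvd

theorem Finset.sum_Icc_zero_natCast {M : Type*} [AddCommMonoid M] (N : ℕ) (g : ℤ → M) :
    ∑ k ∈ Icc (0 : ℤ) N, g k = ∑ t ∈ range (N + 1), g t := by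
  rw [Int.Icc_eq_finset_map, sum_map]
  simp

end General

section DiagonalSubstitution

variable (A : Type*) [CommRing A] [Algebra ℚ A]

/-- `f(w) ↦ f(w z)`, with `w` the power series variable and `z` the polynomial one. -/
noncomputable def diagSubst : ℚ⟦X⟧ →+* A[X]⟦X⟧ :=
  (rescale (Polynomial.X : A[X])).comp (map (algebraMap ℚ A[X]))

theorem coeff_diagSubst (f : ℚ⟦X⟧) (l : ℕ) :
    coeff l (diagSubst A f) = Polynomial.C (algebraMap ℚ A (coeff l f)) * Polynomial.X ^ l := by
  rw [diagSubst, RingHom.comp_apply, coeff_rescale, coeff_map, Polynomial.algebraMap_apply,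
    mul_comm]

theorem diagSubst_X : diagSubst A X = X * C Polynomial.X := by
  ext l : 1
  simp only [coeff_diagSubst, coeff_mul_C, coeff_X]
  split_ifs with h <;> simp [h]

variable {A} in
theorem map_diagSubst {B : Type*} [CommRing B] [Algebra ℚ B] (φ : A →+* B) (f : ℚ⟦X⟧) :
    map (Polynomial.mapRingHom φ) (diagSubst A f) = diagSubst B f := by
  ext l : 1
  rw [coeff_map, coeff_diagSubst, coeff_diagSubst, map_mul, map_pow, Polynomial.coe_mapRingHom,
    Polynomial.map_C, Polynomial.map_X, ← RingHom.comp_apply φ,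
    RingHom.ext_rat (φ.comp (algebraMap ℚ A)) (algebraMap ℚ B)]

end DiagonalSubstitution

section CcoefSeries

open Finset

noncomputable def ccoefNum (r : ℕ) (d : Fin r → ℕ) (p β : ℕ) : ℚ⟦X⟧ :=
  (X + (β : ℚ⟦X⟧)) ^ p *
    ∏ k : Fin r, ∏ i ∈ range (d k * β), ((d k : ℚ⟦X⟧) * X + ((i + 1 : ℕ) : ℚ⟦X⟧))

noncomputable def ccoefDen (n β : ℕ) : ℚ⟦X⟧ :=
  ∏ j ∈ range β, (X + ((j + 1 : ℕ) : ℚ⟦X⟧)) ^ n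

theorem ccoef_natCast (n r : ℕ) (d : Fin r → ℕ) (p β s : ℕ) :
    ccoef n r d p β s = coeff s (ccoefNum r d p β * (ccoefDen n β)⁻¹) := by
  simp [ccoef, ccoefNum, ccoefDen]

theorem constantCoeff_ccoefDen_ne_zero (n β : ℕ) : constantCoeff (ccoefDen n β) ≠ 0 := by
  simp only [ccoefDen, map_prod, map_pow, map_add, constantCoeff_X, map_natCast, zero_add]
  exact prod_ne_zero_iff.mpr fun j _ => pow_ne_zero _ (Nat.cast_ne_zero.mpr j.succ_ne_zero)

variable (A : Type*) [CommRing A] [Algebra ℚ A]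

theorem diagSubst_ccoefNum (r : ℕ) (d : Fin r → ℕ) (p β : ℕ) :
    diagSubst A (ccoefNum r d p β) =
      (X * C Polynomial.X + (β : A[X]⟦X⟧)) ^ p *
        ∏ k : Fin r, ∏ i ∈ range (d k * β),
          ((d k : A[X]⟦X⟧) * X * C Polynomial.X + ((i + 1 : ℕ) : A[X]⟦X⟧)) := by
  simp only [ccoefNum, map_mul, map_pow, map_add, map_prod, map_natCast, diagSubst_X, mul_assoc]

theorem diagSubst_ccoefDen (n β : ℕ) :
    diagSubst A (ccoefDen n β) =
      ∏ j ∈ range β, (X * C Polynomial.X + ((j + 1 : ℕ) : A[X]⟦X⟧)) ^ n := by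
  simp only [ccoefDen, map_pow, map_add, map_prod, map_natCast, diagSubst_X]

theorem isUnit_diagSubst_ccoefDen (n β : ℕ) : IsUnit (diagSubst A (ccoefDen n β)) :=
  ((isUnit_iff_constantCoeff).mpr (constantCoeff_ccoefDen_ne_zero n β).isUnit).map _

end CcoefSeries

section RootsOfUnity

open Finset

variable {K : Type*} [Field K] [CharZero K] {n : ℕ}

noncomputable def rootsEval (ζ : K) (n : ℕ) : MvPolynomial (Fin n) ℚ →+* K :=
  MvPolynomial.eval₂Hom (Rat.castHom K) fun k : Fin n => ζ ^ ((k : ℕ) + 1)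

/-- The denominator `∏_{j=1}^{β} ∏_k (w (z - α_k) + j)` of `R_{p,β}`. -/
noncomputable def equivariantDen (n β : ℕ) : (MvPolynomial (Fin n) ℚ)[X]⟦X⟧ :=
  ∏ j ∈ range β, ∏ k : Fin n,
    (X * C (Polynomial.X - Polynomial.C (MvPolynomial.X k)) +
      ((j + 1 : ℕ) : (MvPolynomial (Fin n) ℚ)[X]⟦X⟧))

theorem map_rootsEval_equivariantDen {ζ : K} (hζ : IsPrimitiveRoot ζ n) (hn : 0 < n) (β : ℕ) :
    map (Polynomial.mapRingHom (rootsEval ζ n)) (equivariantDen n β) =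
      ∏ j ∈ range β, ((X * C Polynomial.X + ((j + 1 : ℕ) : K[X]⟦X⟧)) ^ n - X ^ n) := by
  have hρ : IsPrimitiveRoot (algebraMap K K[X]⟦X⟧ ζ) n :=
    hζ.map_of_injective (algebraMap K K[X]⟦X⟧).injective
  rw [equivariantDen, map_prod]
  refine prod_congr rfl fun j _ => ?_
  rw [map_prod, ← hρ.prod_sub_pow_succ_mul hn]
  refine prod_congr rfl fun k _ => ?_
  simp only [rootsEval, map_add, map_mul, map_sub, map_X, map_C, map_natCast,
    Polynomial.coe_mapRingHom, Polynomial.map_X, Polynomial.map_C, MvPolynomial.coe_eval₂Hom,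
    MvPolynomial.eval₂_X, PowerSeries.algebraMap_apply, Polynomial.algebraMap_apply,
    Algebra.algebraMap_self, RingHom.id_apply, ← map_pow]
  ring

theorem coeff_map_rootsEval_of_mul_eq {ζ : K} (hζ : IsPrimitiveRoot ζ n) {β S : ℕ} (hS : S < n)
    {F : ℚ⟦X⟧} {P R : (MvPolynomial (Fin n) ℚ)[X]⟦X⟧}
    (hR : equivariantDen n β * R = P * diagSubst _ F) :
    coeff S (map (Polynomial.mapRingHom (rootsEval ζ n)) R) =
      coeff S (map (Polynomial.mapRingHom (rootsEval ζ n)) P *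
        diagSubst K (F * (ccoefDen n β)⁻¹)) := by
  set Φ := map (Polynomial.mapRingHom (rootsEval ζ n))
  have hcong : X ^ n ∣ diagSubst K (ccoefDen n β) - Φ (equivariantDen n β) := by
    rw [diagSubst_ccoefDen, map_rootsEval_equivariantDen hζ (by omega)]
    exact dvd_prod_sub_prod_sub _ _ _
  have hmul : Φ (equivariantDen n β) * Φ R =
      diagSubst K (ccoefDen n β) * (Φ P * diagSubst K (F * (ccoefDen n β)⁻¹)) := by
    rw [← map_mul, hR, map_mul, map_diagSubst, mul_left_comm, ← map_mul, mul_comm F,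
      ← mul_assoc, PowerSeries.mul_inv_cancel _ (constantCoeff_ccoefDen_ne_zero n β), one_mul]
  have hdvd := dvd_sub_of_mul_eq_mul (isUnit_diagSubst_ccoefDen K n β) hcong hmul
  rw [X_pow_dvd_iff] at hdvd
  exact sub_eq_zero.mp ((map_sub _ _ _).symm.trans (hdvd S hS))

end RootsOfUnity

section SpreadMonomial

open Finset

variable {R : Type*} [CommSemiring R]

noncomputable def spreadMonomial (ν : ℕ) (c : ℕ → R) (b : ℕ) : R⟦X⟧ :=
  if ν ∣ b then C (c (b / ν)) * X ^ (b / ν) else 0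

theorem spreadMonomial_zero (ν : ℕ) (c : ℕ → R) : spreadMonomial ν c 0 = C (c 0) := by
  simp [spreadMonomial]

theorem spreadMonomial_mul_left {ν : ℕ} (hν : 0 < ν) (c : ℕ → R) (γ : ℕ) :
    spreadMonomial ν c (ν * γ) = C (c γ) * X ^ γ := by
  rw [spreadMonomial, if_pos (dvd_mul_right ν γ), Nat.mul_div_cancel_left γ hν]

theorem spreadMonomial_of_not_dvd {ν : ℕ} (c : ℕ → R) {b : ℕ} (hb : ¬ν ∣ b) :
    spreadMonomial ν c b = 0 :=
  if_neg hb

theorem sum_spreadMonomial_mul_spreadMonomial {ν : ℕ} (hν : 0 < ν) (p : ℕ) (a c : ℕ → ℕ → R)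
    (b : ℕ) :
    ∑ b₁ ∈ range b, ∑ t ∈ range (p - b₁ + 1),
        spreadMonomial ν (a t) b₁ * spreadMonomial ν (c t) (b - b₁) =
      spreadMonomial ν
        (fun γ => ∑ β ∈ range γ, ∑ t ∈ range (p - ν * β + 1), a t β * c t (γ - β)) b := by
  by_cases hdvd : ν ∣ b
  · obtain ⟨γ, rfl⟩ := hdvd
    rw [sum_range_mul_of_not_dvd hν _ ?_ γ, spreadMonomial_mul_left hν, map_sum, sum_mul]
    · refine sum_congr rfl fun β hβ => ?_
      rw [map_sum, sum_mul]
      refine sum_congr rfl fun t _ => ?_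
      rw [← Nat.mul_sub, spreadMonomial_mul_left hν, spreadMonomial_mul_left hν, map_mul,
        ← pow_mul_pow_sub X (mem_range.mp hβ).le]
      ring
    · intro b₁ hb₁
      exact sum_eq_zero fun t _ => by rw [spreadMonomial_of_not_dvd _ hb₁, zero_mul]
  · rw [spreadMonomial_of_not_dvd _ hdvd]
    refine sum_eq_zero fun b₁ hb₁ => sum_eq_zero fun t _ => ?_
    by_cases h1 : ν ∣ b₁
    · have h2 : ¬ν ∣ b - b₁ := fun h2 =>
        hdvd (Nat.sub_add_cancel (mem_range.mp hb₁).le ▸ h2.add h1)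
      rw [spreadMonomial_of_not_dvd _ h2, mul_zero]
    · rw [spreadMonomial_of_not_dvd _ h1, zero_mul]

end SpreadMonomial

section Coefficients

theorem coeff_coeff_C_X_pow_mul_X_pow_mul_diagSubst (A : Type*) [CommRing A] [Algebra ℚ A]
    (r N S y : ℕ) (f : ℚ⟦X⟧) :
    (coeff S (C (Polynomial.X ^ r) * X ^ N * diagSubst A f)).coeff y =
      if N ≤ S ∧ y = S - N + r then algebraMap ℚ A (coeff (S - N) f) else 0 := by
  rw [mul_right_comm, coeff_mul_X_pow']
  by_cases hN : N ≤ S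
  · rw [if_pos hN, coeff_C_mul, coeff_diagSubst, ← mul_assoc, mul_comm, ← mul_assoc, ← pow_add,
      Polynomial.coeff_X_pow_mul', Polynomial.coeff_C]
    split_ifs <;> first | rfl | omega
  · rw [if_neg hN, if_neg (by omega), Polynomial.coeff_zero]

variable {K : Type*} [Field K] [CharZero K] {n : ℕ}

theorem map_rootsEval_mk_coeff_coeff {ζ : K} (hζ : IsPrimitiveRoot ζ n) {ν : ℕ} (hν : 0 < ν)
    (r : ℕ) (d : Fin r → ℕ) (t : ℕ) (R : ℕ → (MvPolynomial (Fin n) ℚ)[X]⟦X⟧)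
    (hR : ∀ β, equivariantDen n β * R β =
      C (Polynomial.X ^ r) * X ^ (ν * β) * diagSubst _ (ccoefNum r d t β))
    {s b : ℕ} (hsb : s + b < n) :
    map (rootsEval ζ n) (mk fun β => (coeff (s + b) (R β)).coeff (s + r)) =
      spreadMonomial ν (fun γ => (ccoef n r d t γ s : K)) b := by
  ext β
  have hev : rootsEval ζ n ((coeff (s + b) (R β)).coeff (s + r)) =
      (coeff (s + b) (map (Polynomial.mapRingHom (rootsEval ζ n)) (R β))).coeff (s + r) := by
    rw [coeff_map, Polynomial.coe_mapRingHom, Polynomial.coeff_map]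
  have hP : map (Polynomial.mapRingHom (rootsEval ζ n)) (C (Polynomial.X ^ r) * X ^ (ν * β)) =
      C (Polynomial.X ^ r) * X ^ (ν * β) := by
    simp
  rw [coeff_map, coeff_mk, hev, coeff_map_rootsEval_of_mul_eq hζ hsb (hR β), hP,
    coeff_coeff_C_X_pow_mul_X_pow_mul_diagSubst]
  by_cases hb : ν * β = b
  · subst hb
    rw [spreadMonomial_mul_left hν, coeff_C_mul_X_pow, if_pos rfl, if_pos ⟨by omega, by omega⟩,
      Nat.add_sub_cancel, ← ccoef_natCast, eq_ratCast]
  · rw [if_neg (by omega), spreadMonomial]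
    split_ifs with hdvd
    · rw [coeff_C_mul_X_pow, if_neg fun h : β = b / ν => hb (h ▸ Nat.mul_div_cancel' hdvd)]
    · rfl

end Coefficients

section Recursion

open Finset

variable {K : Type*} [Field K] [CharZero K] {B : Type*} [CommRing B]

theorem map_eq_spreadMonomial_of_rec (Φ : B →+* K⟦X⟧) {ν : ℕ} (hν : 0 < ν) (p : ℕ)
    (c : ℕ → ℕ → ℤ → ℚ) (a : ℤ → ℕ → ℚ)
    (ha0 : ∀ l : ℤ, a l 0 = if l = (p : ℤ) then 1 else 0)
    (harec : ∀ (l : ℤ) (β : ℕ), 1 ≤ β → 0 ≤ l → l ≤ (p : ℤ) - (ν : ℤ) * (β : ℤ) →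
      a l β = -∑ β₁ ∈ range β, ∑ k ∈ Icc (0 : ℤ) ((p : ℤ) - (ν : ℤ) * (β₁ : ℤ)),
        a k β₁ * c k.toNat (β - β₁) l)
    (Cc : ℕ → ℕ → ℕ → B)
    (hCc : ∀ t s b, s + b ≤ p → Φ (Cc t (s + b) b) = spreadMonomial ν (fun γ => (c t γ s : K)) b)
    (T : ℕ → ℕ → B) (hT0 : ∀ s, T s 0 = if p = s then 1 else 0)
    (hTrec : ∀ s b, 1 ≤ b → s + b ≤ p →
      T s b = -∑ b₁ ∈ range b, ∑ t ∈ range (p - b₁ + 1), T t b₁ * Cc t (s + b - b₁) (b - b₁))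
    (b s : ℕ) (hsb : s + b ≤ p) :
    Φ (T s b) = spreadMonomial ν (fun γ => (a s γ : K)) b := by
  induction b using Nat.strong_induction_on generalizing s with
  | _ b ih =>
  rcases Nat.eq_zero_or_pos b with rfl | hb
  · rw [hT0, spreadMonomial_zero, ha0]
    by_cases hps : p = s
    · simp [hps]
    · simp [hps, Ne.symm hps]
  have hterm : ∀ b₁ ∈ range b,
      Φ (∑ t ∈ range (p - b₁ + 1), T t b₁ * Cc t (s + b - b₁) (b - b₁)) =
        ∑ t ∈ range (p - b₁ + 1), spreadMonomial ν (fun γ => (a t γ : K)) b₁ *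
          spreadMonomial ν (fun γ => (c t γ s : K)) (b - b₁) := by
    intro b₁ hb₁
    rw [mem_range] at hb₁
    rw [map_sum]
    refine sum_congr rfl fun t ht => ?_
    rw [mem_range] at ht
    rw [map_mul, ih b₁ hb₁ t (by omega), show s + b - b₁ = s + (b - b₁) by omega,
      hCc t s (b - b₁) (by omega)]
  rw [hTrec s b hb hsb, map_neg, map_sum, sum_congr rfl hterm,
    sum_spreadMonomial_mul_spreadMonomial hν]
  by_cases hdvd : ν ∣ b
  · obtain ⟨γ, rfl⟩ := hdvd
    rw [spreadMonomial_mul_left hν, spreadMonomial_mul_left hν,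
      harec s γ (Nat.pos_of_mul_pos_left hb) (by positivity) (by omega), ← neg_mul, ← map_neg]
    push_cast
    congr 3
    refine sum_congr rfl fun β hβ => ?_
    have hle : ν * β ≤ p := (Nat.mul_le_mul_left ν (mem_range.mp hβ).le).trans (by omega)
    rw [show (p : ℤ) - ν * β = ((p - ν * β : ℕ) : ℤ) by push_cast [hle]; ring,
      sum_Icc_zero_natCast]
    simp only [Int.toNat_natCast]
  · rw [spreadMonomial_of_not_dvd _ hdvd, spreadMonomial_of_not_dvd _ hdvd, neg_zero]

end Recursion

theorem stmt14_general (n r : ℕ) (d : Fin r → ℕ)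
    (m : ℕ)
    (ν : ℕ) (hν : ν = n - m) (hmn : m < n)
    -- the rational coefficients c̃_{p,l}^{(β)}
    (ct : ℕ → ℤ → ℕ → ℚ)
    (hct0 : ∀ (p : ℕ) (l : ℤ), ct p l 0 = if l = (p : ℤ) then 1 else 0)
    (hctrec : ∀ (p : ℕ) (l : ℤ) (β : ℕ), 1 ≤ β → 0 ≤ l → l ≤ (p : ℤ) - (ν : ℤ) * (β : ℤ) →
      ct p l β = -∑ β₁ ∈ Finset.range β, ∑ k ∈ Finset.Icc (0 : ℤ) ((p : ℤ) - (ν : ℤ) * (β₁ : ℤ)),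
        ct p k β₁ * ccoef n r d k.toNat (β - β₁) l)
    -- the series R_{p,β}(z,w) ∈ ℚ[α₁,…,α_n][z][[w]], characterized by clearing denominators
    (R : ℕ → ℕ → PowerSeries (Polynomial (MvPolynomial (Fin n) ℚ)))
    (hR : ∀ p β : ℕ,
      (∏ j ∈ Finset.range β, ∏ k : Fin n,
          (PowerSeries.X * PowerSeries.C
              ((Polynomial.X - Polynomial.C (MvPolynomial.X k)) : Polynomial (MvPolynomial (Fin n) ℚ)) +
            ((j + 1 : ℕ) : PowerSeries (Polynomial (MvPolynomial (Fin n) ℚ))))) * R p β =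
      PowerSeries.C ((Polynomial.X ^ r : Polynomial (MvPolynomial (Fin n) ℚ))) *
        PowerSeries.X ^ (ν * β) *
        (PowerSeries.X * PowerSeries.C (Polynomial.X : Polynomial (MvPolynomial (Fin n) ℚ)) +
          ((β : ℕ) : PowerSeries (Polynomial (MvPolynomial (Fin n) ℚ)))) ^ p *
        ∏ k : Fin r, ∏ i ∈ Finset.range (d k * β),
          ((d k : PowerSeries (Polynomial (MvPolynomial (Fin n) ℚ))) * PowerSeries.X *
              PowerSeries.C (Polynomial.X : Polynomial (MvPolynomial (Fin n) ℚ)) +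
            ((i + 1 : ℕ) : PowerSeries (Polynomial (MvPolynomial (Fin n) ℚ)))))
    -- 𝒞_{p,s}^{(b)} ∈ ℚ[α₁,…,α_n][[q]]: coefficient of w^s z^{s+r−b} in R_{p,β}
    (Cc : ℕ → ℕ → ℕ → PowerSeries (MvPolynomial (Fin n) ℚ))
    (hCc : ∀ p s b : ℕ, Cc p s b = PowerSeries.mk fun β =>
      if b ≤ s + r then
        Polynomial.coeff (PowerSeries.coeff s (R p β))
          (s + r - b)
      else 0)
    -- 𝒞̃_{p,s}^{(b)}
    (Ct : ℕ → ℕ → ℕ → PowerSeries (MvPolynomial (Fin n) ℚ))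
    (hCt0 : ∀ p s : ℕ, Ct p s 0 = if p = s then 1 else 0)
    (hCtrec : ∀ p s b : ℕ, 1 ≤ b → s + b ≤ p →
      Ct p s b = -∑ b₁ ∈ Finset.range b, ∑ t ∈ Finset.range (p - b₁ + 1),
        Ct p t b₁ * Cc t (s + b - b₁) (b - b₁))
    -- evaluation at the primitive n-th roots of unity: α_k ↦ ζ^k
    (K : Type) [Field K] [CharZero K] (ζ : K) (hζ : IsPrimitiveRoot ζ n)
    (p : ℕ) (hp : p < n) :
    ∀ b s : ℕ, s + b ≤ p →
      (¬ (ν ∣ b) →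
        PowerSeries.map
            (MvPolynomial.eval₂Hom (Rat.castHom K) fun k : Fin n => ζ ^ ((k : ℕ) + 1))
            (Ct p s b) = 0) ∧
      ∀ γ : ℕ, b = ν * γ →
        PowerSeries.map
            (MvPolynomial.eval₂Hom (Rat.castHom K) fun k : Fin n => ζ ^ ((k : ℕ) + 1))
            (Ct p s b)
          = PowerSeries.C ((ct p (s : ℤ) γ : ℚ) : K) * PowerSeries.X ^ γ := by
  have hν0 : 0 < ν := hν ▸ Nat.sub_pos_of_lt hmn
  have hR' : ∀ t β, equivariantDen n β * R t β = C (Polynomial.X ^ r) *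
      X ^ (ν * β) * diagSubst _ (ccoefNum r d t β) := fun t β => by
    rw [diagSubst_ccoefNum, ← mul_assoc]
    exact hR t β
  have hCc' : ∀ t s b, s + b ≤ p → map (rootsEval ζ n) (Cc t (s + b) b) =
      spreadMonomial ν (fun γ => (ccoef n r d t γ s : K)) b := by
    intro t s b hsb
    rw [← map_rootsEval_mk_coeff_coeff hζ hν0 r d t (R t) (hR' t) (by omega), hCc]
    congr
    ext β
    rw [if_pos (by omega), show s + b + r - b = s + r by omega]
  intro b s hsb
  have key := map_eq_spreadMonomial_of_rec (map (rootsEval ζ n)) hν0 p (ccoef n r d)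
    (ct p) (hct0 p) (hctrec p) Cc hCc' (Ct p) (hCt0 p) (hCtrec p) b s hsb
  refine ⟨fun hb => key.trans (spreadMonomial_of_not_dvd _ hb), fun γ hγ => ?_⟩
  exact key.trans (hγ ▸ spreadMonomial_mul_left hν0 _ γ)

theorem stmt14 (n r : ℕ) (hr : 1 ≤ r) (d : Fin r → ℕ) (hd : ∀ k, 2 ≤ d k)
    (m D : ℕ) (hm : m = ∑ k, d k) (hD : D = ∏ k, d k ^ d k)
    (ν : ℕ) (hν : ν = n - m) (hmn : m < n)
    -- the rational coefficients c̃_{p,l}^{(β)}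
    (ct : ℕ → ℤ → ℕ → ℚ)
    (hct0 : ∀ (p : ℕ) (l : ℤ), ct p l 0 = if l = (p : ℤ) then 1 else 0)
    (hctz : ∀ (p : ℕ) (l : ℤ) (β : ℕ),
      (l < 0 ∨ (p : ℤ) - (ν : ℤ) * (β : ℤ) < l) → ct p l β = 0)
    (hctrec : ∀ (p : ℕ) (l : ℤ) (β : ℕ), 1 ≤ β → 0 ≤ l → l ≤ (p : ℤ) - (ν : ℤ) * (β : ℤ) →
      ct p l β = -∑ β₁ ∈ Finset.range β, ∑ k ∈ Finset.Icc (0 : ℤ) ((p : ℤ) - (ν : ℤ) * (β₁ : ℤ)),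
        ct p k β₁ * ccoef n r d k.toNat (β - β₁) l)
    -- the series R_{p,β}(z,w) ∈ ℚ[α₁,…,α_n][z][[w]], characterized by clearing denominators
    (R : ℕ → ℕ → PowerSeries (Polynomial (MvPolynomial (Fin n) ℚ)))
    (hR : ∀ p β : ℕ,
      (∏ j ∈ Finset.range β, ∏ k : Fin n,
          (PowerSeries.X * PowerSeries.C
              ((Polynomial.X - Polynomial.C (MvPolynomial.X k)) : Polynomial (MvPolynomial (Fin n) ℚ)) +
            ((j + 1 : ℕ) : PowerSeries (Polynomial (MvPolynomial (Fin n) ℚ))))) * R p β =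
      PowerSeries.C ((Polynomial.X ^ r : Polynomial (MvPolynomial (Fin n) ℚ))) *
        PowerSeries.X ^ (ν * β) *
        (PowerSeries.X * PowerSeries.C (Polynomial.X : Polynomial (MvPolynomial (Fin n) ℚ)) +
          ((β : ℕ) : PowerSeries (Polynomial (MvPolynomial (Fin n) ℚ)))) ^ p *
        ∏ k : Fin r, ∏ i ∈ Finset.range (d k * β),
          ((d k : PowerSeries (Polynomial (MvPolynomial (Fin n) ℚ))) * PowerSeries.X *
              PowerSeries.C (Polynomial.X : Polynomial (MvPolynomial (Fin n) ℚ)) +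
            ((i + 1 : ℕ) : PowerSeries (Polynomial (MvPolynomial (Fin n) ℚ)))))
    -- 𝒞_{p,s}^{(b)} ∈ ℚ[α₁,…,α_n][[q]]: coefficient of w^s z^{s+r−b} in R_{p,β}
    (Cc : ℕ → ℕ → ℕ → PowerSeries (MvPolynomial (Fin n) ℚ))
    (hCc : ∀ p s b : ℕ, Cc p s b = PowerSeries.mk fun β =>
      if b ≤ s + r then
        Polynomial.coeff (PowerSeries.coeff s (R p β))
          (s + r - b)
      else 0)
    -- 𝒞̃_{p,s}^{(b)}
    (Ct : ℕ → ℕ → ℕ → PowerSeries (MvPolynomial (Fin n) ℚ))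
    (hCt0 : ∀ p s : ℕ, Ct p s 0 = if p = s then 1 else 0)
    (hCtz : ∀ p s b : ℕ, p < s + b → Ct p s b = 0)
    (hCtrec : ∀ p s b : ℕ, 1 ≤ b → s + b ≤ p →
      Ct p s b = -∑ b₁ ∈ Finset.range b, ∑ t ∈ Finset.range (p - b₁ + 1),
        Ct p t b₁ * Cc t (s + b - b₁) (b - b₁))
    -- evaluation at the primitive n-th roots of unity: α_k ↦ ζ^k
    (K : Type) [Field K] [CharZero K] (ζ : K) (hζ : IsPrimitiveRoot ζ n)
    (p : ℕ) (hp : p < n) :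
    ∀ b s : ℕ, s + b ≤ p →
      (¬ (ν ∣ b) →
        PowerSeries.map
            (MvPolynomial.eval₂Hom (Rat.castHom K) fun k : Fin n => ζ ^ ((k : ℕ) + 1))
            (Ct p s b) = 0) ∧
      ∀ γ : ℕ, b = ν * γ →
        PowerSeries.map
            (MvPolynomial.eval₂Hom (Rat.castHom K) fun k : Fin n => ζ ^ ((k : ℕ) + 1))
            (Ct p s b)
          = PowerSeries.C ((ct p (s : ℤ) γ : ℚ) : K) * PowerSeries.X ^ γ :=
  stmt14_general n r d m ν hν hmn ct hct0 hctrec R hR Cc hCc Ct hCt0 hCtrec K ζ hζ p hp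
end

section
/- Define U₁(n,𝐝,β) := ∑_{p=0}^{n−1−r} ∑_{β₁+β₂=β, β₁,β₂≥0} c̃_{n−1−r−p, n−1−r−p−νβ₁}^{(β₁)} · c̃_{p, p−νβ₂−1}^{(β₂)}. Then U₁(n,𝐝,1) = −(D/2)·( ( ∑_{i=1}^r (d_i−1)/2 )² − ∑_{i=1}^r (d_i−1)(2d_i−1)/(6 d_i) ). In particular, for r = 1 and 𝐝 = (d): U₁(n,d,1) = −(d−1)(d−2)(3d−1)·d^{d−1}/24. -/
/-!
For `β = 1` only the term `β₁ = 0` of `U₁` survives, and the recursion gives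
`c̃_{p,l}^{(1)} = -c_{p,l}^{(1)}`, so `U₁ = -∑_{p < n-r} [w^{p-ν-1}] F(w) (1+w)^{p-n}` with
`F = ∏_k ∏_{i=1}^{d_k} (d_k w + i)`. Pascal's rule `[w^l] (1+w) G = [w^l] G + [w^{l-1}] G` makes
this sum telescope to `-[w^{m-r-2}] F(w) (1+w)^{-r}`. The factor `i = d_k` of each inner product
is `d_k (1+w)`, so `F (1+w)^{-r} = (∏ d_k) F̃` for a polynomial `F̃` of degree `m - r`, and the
coefficient two below its top degree is the coefficient of `w²` in the reversed product
`∏ (i w + d_k)`. For a product `∏ (a w + b)` that coefficient is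
`(∏ b) ((∑ a/b)² - ∑ (a/b)²) / 2`, and the power sums `∑ i / d`, `∑ i² / d²` give the formula.
-/

open Finset Polynomial

namespace PowerSeries

variable {R K : Type*} [Semiring R] [Field K]

noncomputable def intCoeff (l : ℤ) (f : R⟦X⟧) : R :=
  if l < 0 then 0 else coeff l.toNat f

theorem intCoeff_of_neg {l : ℤ} (hl : l < 0) (f : R⟦X⟧) : intCoeff l f = 0 := if_pos hl

theorem intCoeff_natCast (n : ℕ) (f : R⟦X⟧) : intCoeff n f = coeff n f := by
  simp [intCoeff]

theorem intCoeff_C_mul (l : ℤ) (a : R) (f : R⟦X⟧) : intCoeff l (C a * f) = a * intCoeff l f := by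
  unfold intCoeff
  split_ifs <;> simp

theorem intCoeff_X_add_one_mul (l : ℤ) (f : R⟦X⟧) :
    intCoeff l ((X + 1) * f) = intCoeff l f + intCoeff (l - 1) f := by
  rcases lt_or_ge l 0 with hl | hl
  · simp [intCoeff_of_neg hl, intCoeff_of_neg (show l - 1 < 0 by omega)]
  obtain ⟨_ | k, rfl⟩ := Int.eq_ofNat_of_zero_le hl
  · simp [intCoeff, add_mul]
  · rw [show ((k + 1 : ℕ) : ℤ) - 1 = k by omega]
    simp only [intCoeff_natCast, add_mul, one_mul, map_add, coeff_succ_X_mul, add_comm]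

theorem pow_mul_inv_pow_of_le {φ : K⟦X⟧} (hφ : constantCoeff φ ≠ 0) {p n : ℕ} (h : p ≤ n) :
    φ ^ p * (φ ^ n)⁻¹ = (φ ^ (n - p))⁻¹ := by
  rw [← Nat.sub_add_cancel h, pow_add, PowerSeries.mul_inv_rev, Nat.add_sub_cancel,
    ← mul_assoc, PowerSeries.mul_inv_cancel _ (by simpa using pow_ne_zero p hφ), one_mul]

theorem constantCoeff_X_add_one_ne_zero : constantCoeff (X + 1 : K⟦X⟧) ≠ 0 := by simp

theorem sum_range_intCoeff_mul_inv_pow (F : K⟦X⟧) (s : ℤ) {N n : ℕ} (hN : N ≤ n) :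
    ∑ p ∈ range N, intCoeff (p + s) (F * ((X + 1) ^ (n - p))⁻¹)
      = intCoeff (N + s - 1) (F * ((X + 1) ^ (n - N))⁻¹)
        - intCoeff (s - 1) (F * ((X + 1) ^ n)⁻¹) := by
  let T (p : ℕ) : K := intCoeff (p + s - 1) (F * ((X + 1) ^ (n - p))⁻¹)
  have hstep : ∀ p ∈ range N,
      intCoeff (p + s) (F * ((X + 1) ^ (n - p))⁻¹) = T (p + 1) - T p := by
    intro p hp
    have hshift : (X + 1) * (F * ((X + 1) ^ (n - p))⁻¹) = F * ((X + 1) ^ (n - (p + 1)))⁻¹ := by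
      have := pow_mul_inv_pow_of_le (constantCoeff_X_add_one_ne_zero (K := K))
        (show 1 ≤ n - p by rw [mem_range] at hp; omega)
      rw [pow_one, Nat.sub_sub] at this
      rw [mul_left_comm, this]
    simp only [T, ← hshift, intCoeff_X_add_one_mul]
    push_cast
    ring_nf
  rw [sum_congr rfl hstep, sum_range_sub]
  simp [T]

end PowerSeries

namespace Polynomial

variable {ι K : Type*} [Field K]

theorem coeff_C_mul_X_add_C_mul (a b : K) (f : K[X]) (k : ℕ) :
    ((C a * X + C b) * f).coeff (k + 1) = a * f.coeff k + b * f.coeff (k + 1) := by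
  simp [add_mul, mul_assoc, coeff_C_mul]

theorem coeff_one_prod_C_mul_X_add_C (s : Finset ι) (a b : ι → K) (hb : ∀ i ∈ s, b i ≠ 0) :
    (∏ i ∈ s, (C (a i) * X + C (b i))).coeff 1 = (∏ i ∈ s, b i) * ∑ i ∈ s, a i / b i := by
  induction s using Finset.cons_induction with
  | empty => simp [coeff_one]
  | cons j s hj ih =>
    rw [prod_cons, coeff_C_mul_X_add_C_mul, coeff_zero_prod,
      ih fun i hi => hb i (mem_cons_of_mem hi), prod_cons, sum_cons]
    simp only [coeff_add, mul_coeff_zero, coeff_C_zero, coeff_X_zero, mul_zero, zero_add]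
    set t := a j / b j with ht
    rw [← div_mul_cancel₀ (a j) (hb j (mem_cons_self j s)), ← ht]
    ring

-- Multiplied by `2` so that it holds in every characteristic.
theorem coeff_two_prod_C_mul_X_add_C (s : Finset ι) (a b : ι → K) (hb : ∀ i ∈ s, b i ≠ 0) :
    2 * (∏ i ∈ s, (C (a i) * X + C (b i))).coeff 2
      = (∏ i ∈ s, b i) * ((∑ i ∈ s, a i / b i) ^ 2 - ∑ i ∈ s, (a i / b i) ^ 2) := by
  induction s using Finset.cons_induction with
  | empty => simp [coeff_one]
  | cons j s hj ih =>
    have hs : ∀ i ∈ s, b i ≠ 0 := fun i hi => hb i (mem_cons_of_mem hi)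
    rw [prod_cons, coeff_C_mul_X_add_C_mul, coeff_one_prod_C_mul_X_add_C s a b hs, prod_cons,
      sum_cons, sum_cons]
    set t := a j / b j with ht
    rw [← div_mul_cancel₀ (a j) (hb j (mem_cons_self j s)), ← ht]
    linear_combination b j * ih hs

theorem reverse_C_mul_X_add_C {a : K} (ha : a ≠ 0) (b : K) :
    (C a * X + C b).reverse = C b * X + C a := by
  rw [reverse_add_C, reverse_mul_X, reverse_C, natDegree_C_mul_X a ha, pow_one, add_comm]

theorem reverse_prod (s : Finset ι) (f : ι → K[X]) :
    (∏ i ∈ s, f i).reverse = ∏ i ∈ s, (f i).reverse := by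
  induction s using Finset.cons_induction with
  | empty => simpa using reverse_C (1 : K)
  | cons j s hj ih => rw [prod_cons, prod_cons, reverse_mul_of_domain, ih]

theorem intCoeff_coe_natDegree_sub (f : K[X]) (k : ℕ) :
    PowerSeries.intCoeff (f.natDegree - k : ℤ) (f : PowerSeries K) = f.reverse.coeff k := by
  rw [coeff_reverse, PowerSeries.intCoeff]
  split_ifs with h
  · rw [revAt_eq_self_of_lt (by omega), coeff_eq_zero_of_natDegree_lt (by omega)]
  · rw [revAt_le (by omega), coeff_coe]
    congr
    omega

end Polynomial

section Numerator

variable {r : ℕ} (d : Fin r → ℕ)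

noncomputable def numeratorPoly : ℚ[X] :=
  ∏ k, ∏ i ∈ range (d k), (C (d k : ℚ) * X + C ((i + 1 : ℕ) : ℚ))

noncomputable def reducedNumeratorPoly : ℚ[X] :=
  ∏ k, ∏ i ∈ range (d k - 1), (C (d k : ℚ) * X + C ((i + 1 : ℕ) : ℚ))

theorem coe_numeratorPoly : (numeratorPoly d : PowerSeries ℚ) =
    ∏ k, ∏ i ∈ range (d k),
      ((d k : PowerSeries ℚ) * PowerSeries.X + ((i + 1 : ℕ) : PowerSeries ℚ)) := by
  simp only [numeratorPoly, ← coeToPowerSeries.ringHom_apply, map_prod, map_add, map_mul,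
    map_natCast]
  simp only [coeToPowerSeries.ringHom_apply, coe_X]

theorem ccoef_one {n p : ℕ} (hp : p ≤ n) (l : ℤ) :
    ccoef n r d p 1 l
      = PowerSeries.intCoeff l
          ((numeratorPoly d : PowerSeries ℚ) * ((PowerSeries.X + 1) ^ (n - p))⁻¹) := by
  rw [← PowerSeries.pow_mul_inv_pow_of_le PowerSeries.constantCoeff_X_add_one_ne_zero hp,
    mul_left_comm, coe_numeratorPoly]
  simp [ccoef, PowerSeries.intCoeff, mul_assoc]

theorem numeratorPoly_eq (hd : ∀ k, 0 < d k) :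
    numeratorPoly d = C (∏ k, (d k : ℚ)) * (X + 1) ^ r * reducedNumeratorPoly d := by
  have hlast : ∀ k, ∏ i ∈ range (d k), (C (d k : ℚ) * X + C ((i + 1 : ℕ) : ℚ))
      = C (d k : ℚ) * (X + 1) * ∏ i ∈ range (d k - 1), (C (d k : ℚ) * X + C ((i + 1 : ℕ) : ℚ)) := by
    intro k
    obtain ⟨e, he⟩ : ∃ e, d k = e + 1 := ⟨d k - 1, by have := hd k; omega⟩
    rw [he, Nat.add_sub_cancel, prod_range_succ]
    ring
  simp only [numeratorPoly, reducedNumeratorPoly, hlast, prod_mul_distrib, map_prod, prod_const,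
    card_univ, Fintype.card_fin]

theorem sum_range_sub_one_div {N : ℕ} (hN : 0 < N) :
    ∑ i ∈ range (N - 1), ((i + 1 : ℕ) : ℚ) / N = ((N : ℚ) - 1) / 2 := by
  obtain ⟨M, rfl⟩ : ∃ M, N = M + 1 := ⟨N - 1, by omega⟩
  have hgauss : ∀ M : ℕ, ∑ i ∈ range M, ((i + 1 : ℕ) : ℚ) = M * (M + 1) / 2 := by
    intro M
    induction M with
    | zero => simp
    | succ M ih => rw [sum_range_succ, ih]; push_cast; ring
  rw [Nat.add_sub_cancel, ← sum_div, hgauss]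
  push_cast
  field_simp
  ring

theorem sum_range_sub_one_div_sq {N : ℕ} (hN : 0 < N) :
    ∑ i ∈ range (N - 1), (((i + 1 : ℕ) : ℚ) / N) ^ 2 = ((N : ℚ) - 1) * (2 * N - 1) / (6 * N) := by
  obtain ⟨M, rfl⟩ : ∃ M, N = M + 1 := ⟨N - 1, by omega⟩
  have hsquares :
      ∀ M : ℕ, ∑ i ∈ range M, ((i + 1 : ℕ) : ℚ) ^ 2 = M * (M + 1) * (2 * M + 1) / 6 := by
    intro M
    induction M with
    | zero => simp
    | succ M ih => rw [sum_range_succ, ih]; push_cast; ring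
  simp only [div_pow]
  rw [Nat.add_sub_cancel, ← sum_div, hsquares]
  push_cast
  field_simp
  ring

theorem natCast_ne_zero_of_mem_range_sub_one {N i : ℕ} (hi : i ∈ range (N - 1)) : (N : ℚ) ≠ 0 := by
  rw [mem_range] at hi
  exact Nat.cast_ne_zero.mpr (by omega)

theorem natDegree_reducedNumeratorPoly : (reducedNumeratorPoly d).natDegree = ∑ k, (d k - 1) := by
  rw [reducedNumeratorPoly, prod_sigma', natDegree_prod _ _ fun x hx => ?_]
  · rw [sum_congr rfl fun x hx => natDegree_linear
      (natCast_ne_zero_of_mem_range_sub_one (mem_sigma.mp hx).2)]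
    simp
  · exact ne_zero_of_natDegree_gt (n := 0) (by
      rw [natDegree_linear (natCast_ne_zero_of_mem_range_sub_one (mem_sigma.mp hx).2)]; omega)

theorem reverse_reducedNumeratorPoly : (reducedNumeratorPoly d).reverse =
    ∏ k, ∏ i ∈ range (d k - 1), (C ((i + 1 : ℕ) : ℚ) * X + C (d k : ℚ)) := by
  simp only [reducedNumeratorPoly, reverse_prod]
  exact prod_congr rfl fun k _ => prod_congr rfl fun i hi =>
    reverse_C_mul_X_add_C (natCast_ne_zero_of_mem_range_sub_one hi) _

theorem two_mul_coeff_two_reverse_reducedNumeratorPoly (hd : ∀ k, 0 < d k) :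
    2 * (reducedNumeratorPoly d).reverse.coeff 2
      = (∏ k, (d k : ℚ) ^ (d k - 1)) * ((∑ k, ((d k : ℚ) - 1) / 2) ^ 2
          - ∑ k, ((d k : ℚ) - 1) * (2 * d k - 1) / (6 * d k)) := by
  rw [reverse_reducedNumeratorPoly, prod_sigma',
    coeff_two_prod_C_mul_X_add_C _ _ _ fun x hx =>
      natCast_ne_zero_of_mem_range_sub_one (mem_sigma.mp hx).2,
    ← prod_sigma' (f := fun k _ => (d k : ℚ)),
    ← sum_sigma' (f := fun k i => ((i + 1 : ℕ) : ℚ) / d k),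
    ← sum_sigma' (f := fun k i => (((i + 1 : ℕ) : ℚ) / d k) ^ 2)]
  simp only [prod_const, card_range, sum_range_sub_one_div (hd _), sum_range_sub_one_div_sq (hd _)]

theorem intCoeff_numeratorPoly_mul_inv_pow (hd : ∀ k, 0 < d k) :
    PowerSeries.intCoeff ((∑ k, d k : ℕ) - r - 2)
        ((numeratorPoly d : PowerSeries ℚ) * ((PowerSeries.X + 1) ^ r)⁻¹)
      = (∏ k, d k ^ d k : ℕ) / 2 * ((∑ k, ((d k : ℚ) - 1) / 2) ^ 2
          - ∑ k, ((d k : ℚ) - 1) * (2 * d k - 1) / (6 * d k)) := by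
  have hcancel : (numeratorPoly d : PowerSeries ℚ) * ((PowerSeries.X + 1) ^ r)⁻¹
      = PowerSeries.C (∏ k, (d k : ℚ)) * (reducedNumeratorPoly d : PowerSeries ℚ) := by
    rw [numeratorPoly_eq d hd, Polynomial.coe_mul, Polynomial.coe_mul, coe_C, Polynomial.coe_pow,
      Polynomial.coe_add, coe_X, Polynomial.coe_one, mul_right_comm, mul_assoc _ (_ ^ r),
      PowerSeries.mul_inv_cancel _ (by simp), mul_one]
  have hdeg :
      ((∑ k, d k : ℕ) : ℤ) - r - 2 = ((reducedNumeratorPoly d).natDegree : ℤ) - (2 : ℕ) := by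
    rw [natDegree_reducedNumeratorPoly]
    push_cast [Nat.cast_sub (hd _ : 1 ≤ _), sum_sub_distrib]
    simp
  have hprod : (∏ k, (d k : ℚ)) * ∏ k, (d k : ℚ) ^ (d k - 1) = (∏ k, d k ^ d k : ℕ) := by
    push_cast
    rw [← prod_mul_distrib]
    exact prod_congr rfl fun k _ => by rw [← pow_succ', Nat.sub_add_cancel (hd k)]
  rw [hcancel, PowerSeries.intCoeff_C_mul, hdeg, intCoeff_coe_natDegree_sub, ← hprod]
  linear_combination (∏ k, (d k : ℚ)) / 2 * two_mul_coeff_two_reverse_reducedNumeratorPoly d hd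

theorem sum_range_ccoef_one {n : ℕ} (hrn : r ≤ n) (ν : ℕ) :
    ∑ p ∈ range (n - r), ccoef n r d p 1 ((p : ℤ) - ν - 1)
      = PowerSeries.intCoeff ((n - r : ℕ) - ν - 2)
          ((numeratorPoly d : PowerSeries ℚ) * ((PowerSeries.X + 1) ^ r)⁻¹) := by
  have hshift : ∀ p : ℕ, (p : ℤ) - ν - 1 = p + (-ν - 1) := fun p => by ring
  rw [sum_congr rfl fun p hp => ccoef_one d (by rw [mem_range] at hp; omega) _]
  simp only [hshift]
  rw [PowerSeries.sum_range_intCoeff_mul_inv_pow _ _ (Nat.sub_le n r), Nat.sub_sub_self hrn,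
    PowerSeries.intCoeff_of_neg (show -(ν : ℤ) - 1 - 1 < 0 by omega), sub_zero]
  congr 1
  ring

end Numerator

section RecursiveCoefficients

variable {n r : ℕ} {d : Fin r → ℕ} {ν : ℕ} {ct : ℕ → ℤ → ℕ → ℚ}

theorem sum_range_two_ct (hct0 : ∀ (p : ℕ) (l : ℤ), ct p l 0 = if l = (p : ℤ) then 1 else 0)
    (q p : ℕ) :
    ∑ β₁ ∈ range 2,
        ct q ((q : ℤ) - ν * β₁) β₁ * ct p ((p : ℤ) - ν * ((1 - β₁ : ℕ) : ℤ) - 1) (1 - β₁)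
      = ct p ((p : ℤ) - ν - 1) 1 := by
  simp [sum_range_succ, hct0]

theorem ct_one (hct0 : ∀ (p : ℕ) (l : ℤ), ct p l 0 = if l = (p : ℤ) then 1 else 0)
    (hctz : ∀ (p : ℕ) (l : ℤ) (β : ℕ), (l < 0 ∨ (p : ℤ) - (ν : ℤ) * (β : ℤ) < l) → ct p l β = 0)
    (hctrec : ∀ (p : ℕ) (l : ℤ) (β : ℕ), 1 ≤ β → 0 ≤ l → l ≤ (p : ℤ) - (ν : ℤ) * (β : ℤ) →
      ct p l β = -∑ β₁ ∈ Finset.range β, ∑ k ∈ Finset.Icc (0 : ℤ) ((p : ℤ) - (ν : ℤ) * (β₁ : ℤ)),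
        ct p k β₁ * ccoef n r d k.toNat (β - β₁) l)
    {p : ℕ} {l : ℤ} (hl : l ≤ (p : ℤ) - ν) :
    ct p l 1 = -ccoef n r d p 1 l := by
  rcases lt_or_ge l 0 with hneg | hnonneg
  · rw [hctz p l 1 (Or.inl hneg), ccoef, if_pos hneg, neg_zero]
  · rw [hctrec p l 1 le_rfl hnonneg (by simpa using hl)]
    simp [hct0]

end RecursiveCoefficients

theorem neg_half_mul_single_degree {N : ℕ} (hN : 0 < N) :
    -(((N ^ N : ℕ) : ℚ) / 2) * ((((N : ℚ) - 1) / 2) ^ 2 - ((N : ℚ) - 1) * (2 * N - 1) / (6 * N))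
      = -(((N : ℚ) - 1) * ((N : ℚ) - 2) * (3 * (N : ℚ) - 1) * (N : ℚ) ^ (N - 1) / 24) := by
  obtain ⟨M, rfl⟩ : ∃ M, N = M + 1 := ⟨N - 1, by omega⟩
  simp only [Nat.add_sub_cancel]
  push_cast
  rw [pow_succ]
  field_simp
  ring

theorem stmt18 (n r : ℕ) (hr : 1 ≤ r) (d : Fin r → ℕ) (hd : ∀ k, 2 ≤ d k)
    (m D : ℕ) (hm : m = ∑ k, d k) (hD : D = ∏ k, d k ^ d k)
    (ν : ℕ) (hν : ν = n - m) (hmn : m < n)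
    -- the coefficients c̃_{p,l}^{(β)}
    (ct : ℕ → ℤ → ℕ → ℚ)
    (hct0 : ∀ (p : ℕ) (l : ℤ), ct p l 0 = if l = (p : ℤ) then 1 else 0)
    (hctz : ∀ (p : ℕ) (l : ℤ) (β : ℕ),
      (l < 0 ∨ (p : ℤ) - (ν : ℤ) * (β : ℤ) < l) → ct p l β = 0)
    (hctrec : ∀ (p : ℕ) (l : ℤ) (β : ℕ), 1 ≤ β → 0 ≤ l → l ≤ (p : ℤ) - (ν : ℤ) * (β : ℤ) →
      ct p l β = -∑ β₁ ∈ Finset.range β, ∑ k ∈ Finset.Icc (0 : ℤ) ((p : ℤ) - (ν : ℤ) * (β₁ : ℤ)),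
        ct p k β₁ * ccoef n r d k.toNat (β - β₁) l)
    :
    -- U₁(n,𝐝,1)
    (∑ p ∈ Finset.range (n - r), ∑ β₁ ∈ Finset.range 2,
        ct (n - 1 - r - p) (((n - 1 - r - p : ℕ) : ℤ) - (ν : ℤ) * (β₁ : ℤ)) β₁ *
          ct p ((p : ℤ) - (ν : ℤ) * ((1 - β₁ : ℕ) : ℤ) - 1) (1 - β₁))
      = -((D : ℚ) / 2) *
          ((∑ i : Fin r, ((d i : ℚ) - 1) / 2) ^ 2
            - ∑ i : Fin r, ((d i : ℚ) - 1) * (2 * (d i : ℚ) - 1) / (6 * (d i : ℚ)))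
    ∧ (r = 1 →
      (∑ p ∈ Finset.range (n - r), ∑ β₁ ∈ Finset.range 2,
          ct (n - 1 - r - p) (((n - 1 - r - p : ℕ) : ℤ) - (ν : ℤ) * (β₁ : ℤ)) β₁ *
            ct p ((p : ℤ) - (ν : ℤ) * ((1 - β₁ : ℕ) : ℤ) - 1) (1 - β₁))
        = -((((d ⟨0, hr⟩ : ℚ) - 1) * ((d ⟨0, hr⟩ : ℚ) - 2) * (3 * (d ⟨0, hr⟩ : ℚ) - 1) *
              ((d ⟨0, hr⟩ : ℚ)) ^ (d ⟨0, hr⟩ - 1)) / 24)) := by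
  have hd₀ : ∀ k, 0 < d k := fun k => by linarith [hd k]
  have hrm : r ≤ m := by
    simpa [hm] using sum_le_sum fun k (_ : k ∈ univ) => le_trans one_le_two (hd k)
  have hindex : ((n - r : ℕ) : ℤ) - ν - 2 = ((∑ k, d k : ℕ) : ℤ) - r - 2 := by omega
  rw [sum_congr rfl fun p _ => by rw [sum_range_two_ct hct0, ct_one hct0 hctz hctrec (by omega)],
    sum_neg_distrib, sum_range_ccoef_one d (by omega) ν, hindex,
    intCoeff_numeratorPoly_mul_inv_pow d hd₀, ← hD]
  refine ⟨by ring, fun hr1 => ?_⟩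
  subst hr1
  rw [hD]
  simpa using neg_half_mul_single_degree (hd₀ 0)
end
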